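/- arXiv:1903.04523 — 11 statements merged into one kernel-verified Lean document; each statement's English description precedes it below -/
import Mathlib

section
/- For every finite simple graph G with at least one vertex, the chromatic number of LT(G) equals χ(G) + 1. -/
open SimpleGraph

/-- Transitive step: each vertex `x` gets a clone `x'` adjacent to the closed
neighborhood of `x`. Original vertices are `Sum.inl`, clones are `Sum.inr`. -/
def LTstep {V : Type} (G : SimpleGraph V) : SimpleGraph (V ⊕ V) where
  Adj x y :=
    match x, y with
    | Sum.inl a, Sum.inl b => G.Adj a b
    | Sum.inl a, Sum.inr b => a = b ∨ G.Adj a b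
    | Sum.inr a, Sum.inl b => b = a ∨ G.Adj b a
    | Sum.inr _, Sum.inr _ => False
  symm := by
    constructor
    rintro (a|a) (b|b) h
    · exact h.symm
    · exact h
    · exact h
    · exact h.elim
  loopless := by
    constructor
    rintro (a|a) h
    · exact G.irrefl h
    · exact h

/-- Anti-transitive step: each vertex `x` gets an anti-clone `x*` adjacent to the
complement of the closed neighborhood of `x`. -/
def LATstep {V : Type} (G : SimpleGraph V) : SimpleGraph (V ⊕ V) where
  Adj x y :=
    match x, y with
    | Sum.inl a, Sum.inl b => G.Adj a b
    | Sum.inl a, Sum.inr b => a ≠ b ∧ ¬ G.Adj a b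
    | Sum.inr a, Sum.inl b => b ≠ a ∧ ¬ G.Adj b a
    | Sum.inr _, Sum.inr _ => False
  symm := by
    constructor
    rintro (a|a) (b|b) h
    · exact h.symm
    · exact h
    · exact h
    · exact h.elim
  loopless := by
    constructor
    rintro (a|a) h
    · exact G.irrefl h
    · exact h

/-- The vertex type of the `t`-th iterated local model graph. -/
def ILMVertex (V : Type) : ℕ → Type
  | 0 => V
  | t + 1 => ILMVertex V t ⊕ ILMVertex V t

instance ILMVertex.fintype {V : Type} [Fintype V] : ∀ t, Fintype (ILMVertex V t)
  | 0 => inferInstanceAs (Fintype V)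
  | t + 1 =>
    letI := ILMVertex.fintype (V := V) t
    inferInstanceAs (Fintype (ILMVertex V t ⊕ ILMVertex V t))

instance ILMVertex.nonempty {V : Type} [Nonempty V] : ∀ t, Nonempty (ILMVertex V t)
  | 0 => inferInstanceAs (Nonempty V)
  | t + 1 =>
    letI := ILMVertex.nonempty (V := V) t
    inferInstanceAs (Nonempty (ILMVertex V t ⊕ ILMVertex V t))

/-- The iterated local model: at step `t` apply a transitive step if `S t = true`
(i.e. `s_t = 1`) and an anti-transitive step if `S t = false` (i.e. `s_t = 0`). -/
def ILM {V : Type} (S : ℕ → Bool) (G : SimpleGraph V) : (t : ℕ) → SimpleGraph (ILMVertex V t)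
  | 0 => G
  | t + 1 => if S t then LTstep (ILM S G t) else LATstep (ILM S G t)

/-- For every finite simple graph `G` with at least one vertex,
`χ(LT(G)) = χ(G) + 1`. -/
theorem chromaticNumber_LTstep {V : Type} [Fintype V] [Nonempty V] (G : SimpleGraph V) :
    (LTstep G).chromaticNumber = G.chromaticNumber + 1 := by

  classical
  set n := (G.chromaticNumber).toNat with hn
  have hGtop : G.chromaticNumber ≠ ⊤ :=
    (chromaticNumber_ne_top_iff_exists).mpr ⟨_, G.colorable_of_fintype⟩
  have hχG : G.chromaticNumber = (n : ℕ∞) := (ENat.coe_toNat hGtop).symm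
  have hGn : G.Colorable n := G.colorable_chromaticNumber_of_fintype
  -- Upper bound: LT(G) is (n+1)-colorable
  have hub : (LTstep G).Colorable (n + 1) := by
    obtain ⟨C⟩ := hGn
    refine ⟨Coloring.mk (fun x => match x with
      | Sum.inl a => (C a).castSucc
      | Sum.inr _ => Fin.last n) ?_⟩
    rintro (a|a) (b|b) h
    · intro he
      exact C.valid h (Fin.castSucc_injective n he)
    · exact (Fin.castSucc_lt_last (C a)).ne
    · exact (Fin.castSucc_lt_last (C b)).ne'
    · exact h.elim
  -- Lower bound
  have hLTtop : (LTstep G).chromaticNumber ≠ ⊤ :=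
    (chromaticNumber_ne_top_iff_exists).mpr ⟨_, (LTstep G).colorable_of_fintype⟩
  obtain ⟨m, hχLT⟩ : ∃ m : ℕ, (LTstep G).chromaticNumber = (m : ℕ∞) :=
    ⟨_, (ENat.coe_toNat hLTtop).symm⟩
  have hLTm : (LTstep G).Colorable m := by
    have := (LTstep G).colorable_chromaticNumber_of_fintype
    rwa [hχLT, ENat.toNat_coe] at this
  obtain ⟨x₀⟩ := (inferInstance : Nonempty V)
  have hmpos : m ≠ 0 := by
    rintro rfl
    obtain ⟨C⟩ := hLTm
    exact (C (Sum.inl x₀)).elim0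
  obtain ⟨k, rfl⟩ : ∃ k, m = k + 1 := ⟨m - 1, (Nat.succ_pred_eq_of_pos (Nat.pos_of_ne_zero hmpos)).symm⟩
  have hGk : G.Colorable k := by
    obtain ⟨C⟩ := hLTm
    have hxx : ∀ x : V, C (Sum.inl x) ≠ C (Sum.inr x) := fun x =>
      C.valid (Or.inl rfl)
    refine ⟨Coloring.mk (fun x =>
      if h : C (Sum.inl x) = Fin.last k then
        (C (Sum.inr x)).castPred (fun he => hxx x (h.trans he.symm))
      else (C (Sum.inl x)).castPred h) ?_⟩
    intro a b hab
    have h1 : C (Sum.inl a) ≠ C (Sum.inl b) := C.valid hab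
    have h2 : C (Sum.inr a) ≠ C (Sum.inl b) := C.valid (Or.inr hab.symm)
    have h3 : C (Sum.inl a) ≠ C (Sum.inr b) := C.valid (Or.inr hab)
    by_cases ha : C (Sum.inl a) = Fin.last k <;> by_cases hb : C (Sum.inl b) = Fin.last k
    · exact absurd (ha.trans hb.symm) h1
    · simp only [dif_pos ha, dif_neg hb]
      intro he
      exact h2 (Fin.castPred_inj.mp he)
    · simp only [dif_neg ha, dif_pos hb]
      intro he
      exact h3 (Fin.castPred_inj.mp he)
    · simp only [dif_neg ha, dif_neg hb]
      intro he
      exact h1 (Fin.castPred_inj.mp he)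
  have hnk : (n : ℕ∞) ≤ (k : ℕ∞) := hχG ▸ hGk.chromaticNumber_le
  have hle : (LTstep G).chromaticNumber ≤ (n : ℕ∞) + 1 := by
    have := hub.chromaticNumber_le
    simpa using this
  have hge : (n : ℕ∞) + 1 ≤ (LTstep G).chromaticNumber := by
    rw [hχLT]
    push_cast
    exact add_le_add_left hnk 1
  rw [hχG]
  exact le_antisymm hle hge
end

section
/- Let G be a finite simple graph such that for every vertex v of G there exists a vertex u of G at distance at least 3 from v (i.e., the radius of G is at least 3). Then the chromatic number of LAT(G) equals χ(G) + 1. -/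
open SimpleGraph

lemma edist_le_one_of_adj' {V : Type} {G : SimpleGraph V} {a b : V} (h : G.Adj a b) :
    G.edist a b ≤ 1 := by
  simpa using SimpleGraph.edist_le (SimpleGraph.Walk.cons h SimpleGraph.Walk.nil)

lemma rainbow_vertex {V : Type} [Fintype V] {G : SimpleGraph V} {n : ℕ}
    (c : G.Coloring (Fin n)) (hn : ¬ G.Colorable (n - 1)) (t : Fin n) :
    ∃ y, c y = t ∧ ∀ s : Fin n, s ≠ t → ∃ z, G.Adj y z ∧ c z = s := by
  by_contra hcon
  push_neg at hcon
  have h : ∀ y, c y = t → ∃ s, s ≠ t ∧ ∀ z, G.Adj y z → c z ≠ s := by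
    intro y hy
    obtain ⟨s, hs1, hs2⟩ := hcon y hy
    exact ⟨s, hs1, fun z hz hcz => hs2 z hz hcz⟩
  classical
  let f : V → {s : Fin n // s ≠ t} := fun v =>
    if hv : c v = t then ⟨(h v hv).choose, (h v hv).choose_spec.1⟩ else ⟨c v, hv⟩
  have hf : ∀ {a b : V}, G.Adj a b → f a ≠ f b := by
    intro a b hab
    by_cases ha : c a = t <;> by_cases hb : c b = t
    · exact absurd (ha.trans hb.symm) (c.valid hab)
    · simp only [f, dif_pos ha, dif_neg hb]
      intro hEq
      exact (h a ha).choose_spec.2 b hab (congrArg Subtype.val hEq).symm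
    · simp only [f, dif_neg ha, dif_pos hb]
      intro hEq
      exact (h b hb).choose_spec.2 a hab.symm (congrArg Subtype.val hEq)
    · simp only [f, dif_neg ha, dif_neg hb]
      intro hEq
      exact c.valid hab (congrArg Subtype.val hEq)
  have C : G.Coloring {s : Fin n // s ≠ t} := SimpleGraph.Coloring.mk f fun hab => hf hab
  have hcard : Fintype.card {s : Fin n // s ≠ t} = n - 1 := by
    simp [Fintype.card_subtype_compl]
  exact hn (hcard ▸ C.colorable)

/-- If every vertex of `G` has some vertex at distance at least `3`
from it (radius at least `3`), then `χ(LAT(G)) = χ(G) + 1`. -/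
theorem chromaticNumber_LATstep {V : Type} [Fintype V] [Nonempty V] (G : SimpleGraph V)
    (hrad : ∀ v : V, ∃ u : V, 3 ≤ G.edist v u) :
    (LATstep G).chromaticNumber = G.chromaticNumber + 1 := by
  have hne : G.chromaticNumber ≠ ⊤ := by
    rw [SimpleGraph.chromaticNumber_ne_top_iff_exists]
    exact ⟨_, G.colorable_of_fintype⟩
  obtain ⟨n, hn⟩ := WithTop.ne_top_iff_exists.mp hne
  have hcol : G.Colorable n := SimpleGraph.chromaticNumber_le_iff_colorable.mp hn.ge
  have hnpos : 0 < n := by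
    have h0 := SimpleGraph.chromaticNumber_pos hcol
    rw [← hn] at h0
    exact WithTop.coe_pos.mp h0
  have hnot : ¬ G.Colorable (n - 1) := by
    intro h
    have h1 := h.chromaticNumber_le
    rw [← hn] at h1
    have h2 : n ≤ n - 1 := Nat.cast_le.mp h1
    omega
  -- lower bound ingredient
  have hnLAT : ¬ (LATstep G).Colorable n := by
    rintro ⟨C⟩
    let c : G.Coloring (Fin n) :=
      SimpleGraph.Coloring.mk (fun v => C (Sum.inl v))
        (fun {a b} hab => C.valid (show (LATstep G).Adj (Sum.inl a) (Sum.inl b) from hab))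
    obtain ⟨y, hy, hrain⟩ := rainbow_vertex c hnot ⟨0, hnpos⟩
    obtain ⟨u, hu⟩ := hrad y
    have hyu_ne : y ≠ u := by
      rintro rfl; simp at hu
    have hyu_nadj : ¬ G.Adj y u := by
      intro h
      have := edist_le_one_of_adj' h
      have : (3 : ℕ∞) ≤ 1 := hu.trans this
      simp at this
    by_cases hst : C (Sum.inr u) = (⟨0, hnpos⟩ : Fin n)
    · exact C.valid (show (LATstep G).Adj (Sum.inl y) (Sum.inr u) from ⟨hyu_ne, hyu_nadj⟩)
        (hy.trans hst.symm)
    · obtain ⟨z, hyz, hz⟩ := hrain (C (Sum.inr u)) hst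
      have hzu_ne : z ≠ u := by
        rintro rfl
        exact hyu_nadj hyz
      have hzu_nadj : ¬ G.Adj z u := by
        intro h
        have h1 : G.edist y u ≤ G.edist y z + G.edist z u := SimpleGraph.edist_triangle
        have h2 : G.edist y z ≤ 1 := edist_le_one_of_adj' hyz
        have h3 : G.edist z u ≤ 1 := edist_le_one_of_adj' h
        have : (3 : ℕ∞) ≤ 2 := hu.trans (h1.trans (add_le_add h2 h3))
        norm_num at this
      exact C.valid (show (LATstep G).Adj (Sum.inl z) (Sum.inr u) from ⟨hzu_ne, hzu_nadj⟩) hz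
  -- upper bound ingredient
  have hcolLAT : (LATstep G).Colorable (n + 1) := by
    obtain ⟨C0⟩ := hcol
    refine ⟨SimpleGraph.Coloring.mk
      (fun x => match x with
        | Sum.inl v => (C0 v).castSucc
        | Sum.inr _ => Fin.last n) ?_⟩
    rintro (a | a) (b | b) hab
    · simpa [Fin.castSucc_inj] using C0.valid hab
    · exact Fin.ne_of_lt (Fin.castSucc_lt_last _)
    · exact Fin.ne_of_gt (Fin.castSucc_lt_last _)
    · exact hab.elim
  rw [← hn]
  apply le_antisymm
  · have := hcolLAT.chromaticNumber_le
    rwa [Nat.cast_add, Nat.cast_one] at this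
  · have hlt : (n : ℕ∞) < (LATstep G).chromaticNumber := by
      by_contra hle
      exact hnLAT (SimpleGraph.chromaticNumber_le_iff_colorable.mp (not_lt.mp hle))
    exact Order.add_one_le_of_lt hlt
end

section
/- Let G be a finite simple graph such that for every vertex v of G there exists a vertex u of G at distance at least 3 from v. Then for every vertex v of LT(G) there exists a vertex u of LT(G) at distance at least 3 from v (i.e., if G has radius at least 3, then LT(G) has radius at least 3). -/
open SimpleGraph

lemma LTstep_proj_walk {V : Type} (G : SimpleGraph V) :
    ∀ {x y : V ⊕ V} (w : (LTstep G).Walk x y),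
      G.edist (Sum.elim id id x) (Sum.elim id id y) ≤ w.length := by
  intro x y w
  induction w with
  | nil => simp [edist_self]
  | @cons a b c h p ih =>
    have h1 : G.edist (Sum.elim id id a) (Sum.elim id id b) ≤ 1 := by
      rcases a with a | a <;> rcases b with b | b
      · exact le_of_eq (edist_eq_one_iff_adj.mpr h)
      · rcases h with rfl | h
        · simp [edist_self]
        · exact le_of_eq (edist_eq_one_iff_adj.mpr h)
      · rcases h with rfl | h
        · simp [edist_self]
        · exact le_of_eq (edist_eq_one_iff_adj.mpr h.symm)
      · exact h.elim
    calc G.edist (Sum.elim id id a) (Sum.elim id id c)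
        ≤ G.edist (Sum.elim id id a) (Sum.elim id id b)
          + G.edist (Sum.elim id id b) (Sum.elim id id c) := G.edist_triangle
      _ ≤ 1 + p.length := add_le_add h1 ih
      _ = (p.cons h).length := by simp [Walk.length_cons, add_comm]

/-- If every vertex of `G` has some vertex at distance at least `3`
from it, then the same holds in `LT(G)` (transitive steps preserve radius at
least `3`). -/
theorem LTstep_radius_ge_three {V : Type} [Fintype V] (G : SimpleGraph V)
    (hrad : ∀ v : V, ∃ u : V, 3 ≤ G.edist v u) :
    ∀ v : V ⊕ V, ∃ u : V ⊕ V, 3 ≤ (LTstep G).edist v u := by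
  rintro (a | a) <;>
  · obtain ⟨u, hu⟩ := hrad a
    refine ⟨Sum.inl u, ?_⟩
    rw [edist_eq_sInf]
    refine le_sInf ?_
    rintro _ ⟨w, rfl⟩
    exact hu.trans (LTstep_proj_walk G w)
end

section
/- Let G be a finite simple graph with at least one vertex and let S = (s_0, s_1, s_2, …) be any binary sequence. Then for every t ≥ 0, the chromatic number satisfies χ(G) + t − 1 ≤ χ(ILM^t(S,G)) ≤ χ(G) + t. -/
open SimpleGraph

section ILMAux

variable {α : Type}

/-- `u` is in the closed neighborhood of `v`. -/
def InCN (K : SimpleGraph α) (v u : α) : Prop := u = v ∨ K.Adj v u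

/-- Every vertex has a partner with disjoint closed neighborhood. -/
def Wpart (K : SimpleGraph α) : Prop :=
  ∀ v, ∃ w, ∀ u, InCN K v u → InCN K w u → False

lemma not_colorable_zero [Nonempty α] (K : SimpleGraph α) : ¬ K.Colorable 0 := by
  rintro ⟨c⟩
  exact (c (Classical.arbitrary α)).elim0

/-- Generic "add one color for the new (independent) vertices" upper bound. -/
lemma colorable_sum_step {L : SimpleGraph (α ⊕ α)} {K : SimpleGraph α} {n : ℕ}
    (hll : ∀ a b, L.Adj (.inl a) (.inl b) → K.Adj a b)
    (hrr : ∀ a b, ¬ L.Adj (.inr a) (.inr b)) (h : K.Colorable n) : L.Colorable (n + 1) := by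
  obtain ⟨c⟩ := h
  refine ⟨SimpleGraph.Coloring.mk
    (Sum.elim (fun a => (c a).castSucc) (fun _ => Fin.last n)) ?_⟩
  rintro (a|a) (b|b) hadj
  · exact fun he => c.valid (hll a b hadj) (Fin.castSucc_injective _ he)
  · exact (Fin.castSucc_lt_last (c a)).ne
  · exact (Fin.castSucc_lt_last (c b)).ne'
  · exact (hrr a b hadj).elim

lemma colorable_restrict_step {L : SimpleGraph (α ⊕ α)} {K : SimpleGraph α} {n : ℕ}
    (hmono : ∀ a b, K.Adj a b → L.Adj (.inl a) (.inl b)) (h : L.Colorable n) :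
    K.Colorable n := by
  obtain ⟨c⟩ := h
  exact ⟨SimpleGraph.Coloring.mk (fun a => c (.inl a))
    (fun hab => c.valid (hmono _ _ hab))⟩

/-- Helper: a coloring avoiding `Fin.last n` gives `n`-colorability. -/
lemma colorable_of_avoid {K : SimpleGraph α} {n : ℕ} (e : α → Fin (n + 1))
    (hlast : ∀ a, e a ≠ Fin.last n) (hvalid : ∀ a b, K.Adj a b → e a ≠ e b) :
    K.Colorable n := by
  refine ⟨SimpleGraph.Coloring.mk
    (fun a => ⟨(e a).val, lt_of_le_of_ne (Nat.lt_succ_iff.mp (e a).isLt)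
      (fun h => hlast a (Fin.ext h))⟩) ?_⟩
  intro a b hab he
  apply hvalid a b hab
  have h' := congrArg Fin.val he
  exact Fin.ext h'

/-- LT step always increases the chromatic number. -/
lemma LT_colorable_down {K : SimpleGraph α} {n : ℕ} (h : (LTstep K).Colorable (n + 1)) :
    K.Colorable n := by
  classical
  obtain ⟨c⟩ := h
  refine colorable_of_avoid
    (fun a => if c (.inl a) = Fin.last n then c (.inr a) else c (.inl a)) ?_ ?_
  · intro a
    beta_reduce
    by_cases hca : c (.inl a) = Fin.last n
    · rw [if_pos hca]
      intro hr
      exact c.valid (show (LTstep K).Adj (.inl a) (.inr a) from Or.inl rfl)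
        (hca.trans hr.symm)
    · rwa [if_neg hca]
  · intro a b hab
    beta_reduce
    by_cases hca : c (.inl a) = Fin.last n <;> by_cases hcb : c (.inl b) = Fin.last n
    · exact absurd (hca.trans hcb.symm)
        (c.valid (show (LTstep K).Adj (.inl a) (.inl b) from hab))
    · rw [if_pos hca, if_neg hcb]
      exact c.valid (show (LTstep K).Adj (.inr a) (.inl b) from Or.inr hab.symm)
    · rw [if_neg hca, if_pos hcb]
      exact c.valid (show (LTstep K).Adj (.inl a) (.inr b) from Or.inr hab)
    · rw [if_neg hca, if_neg hcb]
      exact c.valid (show (LTstep K).Adj (.inl a) (.inl b) from hab)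

/-- LAT step increases the chromatic number for graphs with the partner property. -/
lemma LAT_colorable_down {K : SimpleGraph α} (hW : Wpart K) {n : ℕ}
    (h : (LATstep K).Colorable (n + 1)) : K.Colorable n := by
  classical
  obtain ⟨c⟩ := h
  choose w hw using hW
  have key2 : ∀ v u, c (.inl u) = c (.inr (w v)) → ¬ InCN K v u := by
    intro v u hdu hin
    refine hw v u hin ?_
    by_contra hnot
    rw [InCN, not_or] at hnot
    have hadj : (LATstep K).Adj (.inr (w v)) (.inl u) :=
      ⟨hnot.1, fun hadj => hnot.2 hadj.symm⟩
    exact c.valid hadj hdu.symm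
  refine colorable_of_avoid
    (fun a => if c (.inl a) = Fin.last n then c (.inr (w a)) else c (.inl a)) ?_ ?_
  · intro a
    beta_reduce
    by_cases hca : c (.inl a) = Fin.last n
    · rw [if_pos hca]
      intro hr
      exact key2 a a (hca.trans hr.symm) (Or.inl rfl)
    · rwa [if_neg hca]
  · intro a b hab
    beta_reduce
    by_cases hca : c (.inl a) = Fin.last n <;> by_cases hcb : c (.inl b) = Fin.last n
    · exact absurd (hca.trans hcb.symm)
        (c.valid (show (LATstep K).Adj (.inl a) (.inl b) from hab))
    · rw [if_pos hca, if_neg hcb]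
      intro he
      exact key2 a b he.symm (Or.inr hab)
    · rw [if_neg hca, if_pos hcb]
      intro he
      exact key2 b a he (Or.inr hab.symm)
    · rw [if_neg hca, if_neg hcb]
      exact c.valid (show (LATstep K).Adj (.inl a) (.inl b) from hab)

/-- Every LAT image has the partner property. -/
lemma Wpart_LATstep (K : SimpleGraph α) : Wpart (LATstep K) := by
  rintro (a|a)
  · refine ⟨.inr a, ?_⟩
    rintro (b|b) h1 h2
    · rcases h2 with h2 | h2
      · exact nomatch h2
      · have h2' : b ≠ a ∧ ¬ K.Adj b a := h2
        rcases h1 with h1 | h1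
        · exact h2'.1 (by injection h1)
        · exact h2'.2 (show K.Adj a b from h1).symm
    · rcases h1 with h1 | h1
      · exact nomatch h1
      · have h1' : a ≠ b ∧ ¬ K.Adj a b := h1
        rcases h2 with h2 | h2
        · exact h1'.1 (by injection h2 with h2; exact h2.symm)
        · exact h2
  · refine ⟨.inl a, ?_⟩
    rintro (b|b) h1 h2
    · rcases h1 with h1 | h1
      · exact nomatch h1
      · have h1' : b ≠ a ∧ ¬ K.Adj b a := h1
        rcases h2 with h2 | h2
        · exact h1'.1 (by injection h2)
        · exact h1'.2 (show K.Adj a b from h2).symm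
    · rcases h1 with h1 | h1
      · rcases h2 with h2 | h2
        · exact nomatch h2
        · have h2' : a ≠ b ∧ ¬ K.Adj a b := h2
          exact h2'.1 (by injection h1 with h; exact h.symm)
      · exact h1

/-- The partner property is preserved by the LT step. -/
lemma Wpart_LTstep {K : SimpleGraph α} (hW : Wpart K) : Wpart (LTstep K) := by
  rintro (a|a)
  · obtain ⟨wa, hwa⟩ := hW a
    refine ⟨.inl wa, ?_⟩
    rintro (b|b) h1 h2
    · refine hwa b ?_ ?_
      · rcases h1 with h1 | h1
        · exact Or.inl (by injection h1)
        · exact Or.inr (show K.Adj a b from h1)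
      · rcases h2 with h2 | h2
        · exact Or.inl (by injection h2)
        · exact Or.inr (show K.Adj wa b from h2)
    · refine hwa b ?_ ?_
      · rcases h1 with h1 | h1
        · exact nomatch h1
        · rcases (show a = b ∨ K.Adj a b from h1) with h | h
          · exact Or.inl h.symm
          · exact Or.inr h
      · rcases h2 with h2 | h2
        · exact nomatch h2
        · rcases (show wa = b ∨ K.Adj wa b from h2) with h | h
          · exact Or.inl h.symm
          · exact Or.inr h
  · obtain ⟨wa, hwa⟩ := hW a
    refine ⟨.inr wa, ?_⟩
    rintro (b|b) h1 h2
    · refine hwa b ?_ ?_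
      · rcases h1 with h1 | h1
        · exact nomatch h1
        · rcases (show b = a ∨ K.Adj b a from h1) with h | h
          · exact Or.inl h
          · exact Or.inr h.symm
      · rcases h2 with h2 | h2
        · exact nomatch h2
        · rcases (show b = wa ∨ K.Adj b wa from h2) with h | h
          · exact Or.inl h
          · exact Or.inr h.symm
    · rcases h1 with h1 | h1
      · rcases h2 with h2 | h2
        · have hba : b = a := by injection h1
          have hbw : b = wa := by injection h2
          exact hwa a (Or.inl rfl) (Or.inl (hba.symm.trans hbw))
        · exact h2
      · exact h1

end ILMAux

section ILMMain

variable {V : Type} [Fintype V] [Nonempty V]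

lemma ILM_step_true (S : ℕ → Bool) (G : SimpleGraph V) {t : ℕ} (h : S t = true) :
    ILM S G (t + 1) = LTstep (ILM S G t) := by simp [ILM, h]; rfl

lemma ILM_step_false (S : ℕ → Bool) (G : SimpleGraph V) {t : ℕ} (h : S t = false) :
    ILM S G (t + 1) = LATstep (ILM S G t) := by simp [ILM, h]; rfl

lemma ILM_colorable_up (S : ℕ → Bool) (G : SimpleGraph V) {n : ℕ} (hn : G.Colorable n) :
    ∀ t, (ILM S G t).Colorable (n + t) := by
  intro t
  induction t with
  | zero => exact hn
  | succ t ih =>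
    have step : (ILM S G t).Colorable (n + t) → (ILM S G (t + 1)).Colorable (n + t + 1) := by
      intro h
      cases hst : S t
      · rw [ILM_step_false S G hst]
        exact colorable_sum_step (fun a b hab => hab) (fun a b hab => hab) h
      · rw [ILM_step_true S G hst]
        exact colorable_sum_step (fun a b hab => hab) (fun a b hab => hab) h
    exact step ih

lemma ILM_lower (S : ℕ → Bool) (G : SimpleGraph V) (t : ℕ) :
    (∀ m, (ILM S G t).Colorable m → G.Colorable (m - t)) ∨
      ((∀ m, (ILM S G t).Colorable m → G.Colorable (m + 1 - t)) ∧ Wpart (ILM S G t)) := by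
  induction t with
  | zero =>
    left
    intro m h
    exact h
  | succ t ih =>
    haveI : Nonempty (ILMVertex V t) := inferInstance
    haveI : Nonempty (ILMVertex V t ⊕ ILMVertex V t) := ⟨Sum.inl (Classical.arbitrary _)⟩
    cases hst : S t
    · -- LAT step
      right
      rw [ILM_step_false S G hst]
      refine ⟨?_, Wpart_LATstep _⟩
      rcases ih with h1 | ⟨h2, hW⟩
      · intro m hm
        have hrest : (ILM S G t).Colorable m :=
          colorable_restrict_step (fun a b hab => hab) hm
        have := h1 m hrest
        rwa [Nat.succ_sub_succ]
      · intro m hm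
        match m with
        | 0 => exact absurd hm (not_colorable_zero _)
        | m + 1 =>
          have hdown := LAT_colorable_down hW hm
          have := h2 m hdown
          rwa [Nat.succ_sub_succ]
    · -- LT step
      rcases ih with h1 | ⟨h2, hW⟩
      · left
        intro m hm
        rw [ILM_step_true S G hst] at hm
        match m with
        | 0 => exact absurd hm (not_colorable_zero _)
        | m + 1 =>
          have hdown := LT_colorable_down hm
          have := h1 m hdown
          rwa [Nat.succ_sub_succ]
      · right
        rw [ILM_step_true S G hst]
        refine ⟨?_, Wpart_LTstep hW⟩
        intro m hm
        match m with
        | 0 => exact absurd hm (not_colorable_zero _)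
        | m + 1 =>
          have hdown := LT_colorable_down hm
          have := h2 m hdown
          rwa [Nat.succ_sub_succ]

end ILMMain

/-- For any graph `G` with at least one vertex, any binary sequence `S`
and any `t ≥ 0`, `χ(G) + t - 1 ≤ χ(ILM^t(S,G)) ≤ χ(G) + t` (the lower bound is
stated in the equivalent subtraction-free form `χ(G) + t ≤ χ(ILM^t(S,G)) + 1`). -/
theorem chromaticNumber_ILM {V : Type} [Fintype V] [Nonempty V] (G : SimpleGraph V)
    (S : ℕ → Bool) (t : ℕ) :
    G.chromaticNumber + (t : ℕ∞) ≤ (ILM S G t).chromaticNumber + 1 ∧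
      (ILM S G t).chromaticNumber ≤ G.chromaticNumber + (t : ℕ∞) := by
  classical
  haveI : Nonempty (ILMVertex V t) := inferInstance
  haveI : Fintype (ILMVertex V t) := inferInstance
  set n0 : ℕ := G.chromaticNumber.toNat with hn0
  set k : ℕ := (ILM S G t).chromaticNumber.toNat with hk
  have hGne : G.chromaticNumber ≠ ⊤ :=
    (SimpleGraph.chromaticNumber_ne_top_iff_exists).mpr ⟨_, G.colorable_of_fintype⟩
  have hKne : (ILM S G t).chromaticNumber ≠ ⊤ :=
    (SimpleGraph.chromaticNumber_ne_top_iff_exists).mpr ⟨_, (ILM S G t).colorable_of_fintype⟩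
  have hGeq : G.chromaticNumber = (n0 : ℕ∞) := (ENat.coe_toNat hGne).symm
  have hKeq : (ILM S G t).chromaticNumber = (k : ℕ∞) := (ENat.coe_toNat hKne).symm
  have hG : G.Colorable n0 := G.colorable_chromaticNumber_of_fintype
  have hK : (ILM S G t).Colorable k := (ILM S G t).colorable_chromaticNumber_of_fintype
  have hn0pos : 1 ≤ n0 := by
    rcases Nat.eq_zero_or_pos n0 with h | h
    · exact absurd (h ▸ hG) (not_colorable_zero G)
    · exact h
  constructor
  · -- lower bound
    have key : n0 + t ≤ k + 1 := by
      rcases ILM_lower S G t with h1 | ⟨h2, _⟩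
      · have hcol : G.Colorable (k - t) := h1 k hK
        have hle : n0 ≤ k - t := by
          have := hcol.chromaticNumber_le
          rw [hGeq] at this
          exact_mod_cast this
        have htk : t ≤ k := by
          by_contra hlt
          push_neg at hlt
          rw [Nat.sub_eq_zero_of_le hlt.le] at hle
          omega
        omega
      · have hcol : G.Colorable (k + 1 - t) := h2 k hK
        have hle : n0 ≤ k + 1 - t := by
          have := hcol.chromaticNumber_le
          rw [hGeq] at this
          exact_mod_cast this
        have htk : t ≤ k + 1 := by
          by_contra hlt
          push_neg at hlt
          rw [Nat.sub_eq_zero_of_le hlt.le] at hle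
          omega
        omega
    rw [hGeq, hKeq]
    exact_mod_cast key
  · -- upper bound
    have hcol : (ILM S G t).Colorable (n0 + t) := ILM_colorable_up S G hG t
    have := hcol.chromaticNumber_le
    rw [hGeq]
    exact_mod_cast this
end

section
/- Let G be a finite simple graph with at least one vertex and let S = (s_0, s_1, s_2, …) be a binary sequence with at least two indices equal to 0. If τ is the second index with s_τ = 0, then for all t ≥ τ + 1, the domination number satisfies γ(ILM^t(S,G)) ≤ 3. -/
open SimpleGraph

/-- The closed neighborhood `N[v]` of a vertex. -/
def closedNbhd {V : Type} (G : SimpleGraph V) (v : V) : Set V := insert v (G.neighborSet v)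

/-- Two vertices whose closed neighborhoods partition the vertex set. -/
def PartitionsPair {V : Type} (G : SimpleGraph V) (u v : V) : Prop :=
  closedNbhd G u ∪ closedNbhd G v = Set.univ ∧ closedNbhd G u ∩ closedNbhd G v = ∅

/-- A dominating set: every vertex is in the closed neighborhood of a member of `D`. -/
def IsDominatingSet {V : Type} (G : SimpleGraph V) (D : Finset V) : Prop :=
  ∀ v : V, ∃ u ∈ D, u = v ∨ G.Adj u v

/-- The domination number: minimum size of a dominating set. -/
noncomputable def dominationNumber {V : Type} [Fintype V] (G : SimpleGraph V) : ℕ :=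
  sInf {n | ∃ D : Finset V, IsDominatingSet G D ∧ D.card = n}

/-- The local clustering coefficient of a vertex: the number of edges among its
neighbors divided by `(deg choose 2)` (interpreted as `0` when the degree is less
than `2`, by the convention `x / 0 = 0`). -/
noncomputable def localClusteringCoeff {V : Type} (G : SimpleGraph V) (x : V) : ℝ :=
  (Nat.card (G.induce (G.neighborSet x)).edgeSet : ℝ) /
    ((Nat.card (G.neighborSet x)).choose 2 : ℝ)

/-- The clustering coefficient: the average of the local clustering coefficients. -/
noncomputable def clusteringCoeff {V : Type} [Fintype V] (G : SimpleGraph V) : ℝ :=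
  (∑ x : V, localClusteringCoeff G x) / (Fintype.card V : ℝ)

section Aux

variable {V : Type}

/-- `u` is in the closed neighborhood of `v`. -/
def inN (G : SimpleGraph V) (u v : V) : Prop := u = v ∨ G.Adj u v

lemma inN_comm {G : SimpleGraph V} {u v : V} : inN G u v ↔ inN G v u := by
  unfold inN; rw [G.adj_comm, eq_comm]

/-- Two vertices with disjoint closed neighborhoods. -/
def AA (G : SimpleGraph V) : Prop := ∃ x y : V, ∀ b, ¬ (inN G x b ∧ inN G y b)

/-- A dominating triple such that no closed neighborhood contains all three. -/
def BB (G : SimpleGraph V) : Prop :=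
  ∃ u v w : V, (∀ b, inN G u b ∨ inN G v b ∨ inN G w b) ∧
    (∀ b, ¬ (inN G u b ∧ inN G v b ∧ inN G w b))

lemma LT_ll {G : SimpleGraph V} {a b : V} :
    (LTstep G).Adj (Sum.inl a) (Sum.inl b) ↔ G.Adj a b := Iff.rfl
lemma LT_lr {G : SimpleGraph V} {a b : V} :
    (LTstep G).Adj (Sum.inl a) (Sum.inr b) ↔ (a = b ∨ G.Adj a b) := Iff.rfl
lemma LT_rl {G : SimpleGraph V} {a b : V} :
    (LTstep G).Adj (Sum.inr a) (Sum.inl b) ↔ (b = a ∨ G.Adj b a) := Iff.rfl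
lemma LT_rr {G : SimpleGraph V} {a b : V} :
    (LTstep G).Adj (Sum.inr a) (Sum.inr b) ↔ False := Iff.rfl
lemma LAT_ll {G : SimpleGraph V} {a b : V} :
    (LATstep G).Adj (Sum.inl a) (Sum.inl b) ↔ G.Adj a b := Iff.rfl
lemma LAT_lr {G : SimpleGraph V} {a b : V} :
    (LATstep G).Adj (Sum.inl a) (Sum.inr b) ↔ (a ≠ b ∧ ¬ G.Adj a b) := Iff.rfl
lemma LAT_rl {G : SimpleGraph V} {a b : V} :
    (LATstep G).Adj (Sum.inr a) (Sum.inl b) ↔ (b ≠ a ∧ ¬ G.Adj b a) := Iff.rfl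
lemma LAT_rr {G : SimpleGraph V} {a b : V} :
    (LATstep G).Adj (Sum.inr a) (Sum.inr b) ↔ False := Iff.rfl

lemma AA_LAT [Nonempty V] (G : SimpleGraph V) : AA (LATstep G) := by
  obtain ⟨x⟩ := ‹Nonempty V›
  refine ⟨Sum.inl x, Sum.inr x, ?_⟩
  rintro (b | b) ⟨h1, h2⟩
  · simp only [inN, LAT_ll, LAT_rl, Sum.inl.injEq, Sum.inr.injEq,
      reduceCtorEq, false_or] at h1 h2
    rcases h1 with rfl | h1
    · exact h2.1 rfl
    · exact h2.2 h1.symm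
  · simp only [inN, LAT_lr, LAT_rr, Sum.inl.injEq, Sum.inr.injEq,
      reduceCtorEq, false_or, or_false] at h1 h2
    rcases h1 with h1
    exact h1.1 h2

lemma AA_LT {G : SimpleGraph V} (h : AA G) : AA (LTstep G) := by
  obtain ⟨x, y, h⟩ := h
  refine ⟨Sum.inl x, Sum.inl y, ?_⟩
  rintro (b | b) ⟨h1, h2⟩
  · simp only [inN, LT_ll, Sum.inl.injEq] at h1 h2
    exact h b ⟨h1, h2⟩
  · simp only [inN, LT_lr, reduceCtorEq, false_or] at h1 h2
    exact h b ⟨h1, h2⟩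

lemma BB_of_AA_LAT {G : SimpleGraph V} (h : AA G) : BB (LATstep G) := by
  classical
  obtain ⟨x, y, h⟩ := h
  refine ⟨Sum.inl x, Sum.inl y, Sum.inr x, ?_, ?_⟩
  · rintro (b | b)
    · by_cases hx : inN G x b
      · exact Or.inl (by simpa [inN, LAT_ll, Sum.inl.injEq] using hx)
      · refine Or.inr (Or.inr ?_)
        simp only [inN, LAT_rl, reduceCtorEq, false_or]
        refine ⟨?_, ?_⟩
        · rintro rfl; exact hx (Or.inl rfl)
        · intro hab; exact hx (Or.inr hab.symm)
    · rcases not_and_or.mp (h b) with hx | hy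
      · refine Or.inl ?_
        simp only [inN, LAT_lr, reduceCtorEq, false_or]
        exact ⟨fun e => hx (Or.inl e), fun a => hx (Or.inr a)⟩
      · refine Or.inr (Or.inl ?_)
        simp only [inN, LAT_lr, reduceCtorEq, false_or]
        exact ⟨fun e => hy (Or.inl e), fun a => hy (Or.inr a)⟩
  · rintro (b | b) ⟨h1, h2, h3⟩
    · simp only [inN, LAT_ll, LAT_rl, Sum.inl.injEq, reduceCtorEq, false_or] at h1 h3
      rcases h1 with rfl | h1
      · exact h3.1 rfl
      · exact h3.2 h1.symm
    · simp only [inN, LAT_lr, LAT_rr, Sum.inr.injEq, reduceCtorEq, false_or, or_false] at h1 h3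
      exact h1.1 h3

lemma BB_LT {G : SimpleGraph V} (h : BB G) : BB (LTstep G) := by
  obtain ⟨u, v, w, h1, h2⟩ := h
  refine ⟨Sum.inl u, Sum.inl v, Sum.inl w, ?_, ?_⟩
  · rintro (b | b)
    · simpa only [inN, LT_ll, Sum.inl.injEq] using h1 b
    · simpa only [inN, LT_lr, reduceCtorEq, false_or] using h1 b
  · rintro (b | b) hh
    · refine h2 b ?_
      simpa only [inN, LT_ll, Sum.inl.injEq] using hh
    · refine h2 b ?_
      simpa only [inN, LT_lr, reduceCtorEq, false_or] using hh

lemma BB_LAT {G : SimpleGraph V} (h : BB G) : BB (LATstep G) := by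
  classical
  obtain ⟨u, v, w, h1, h2⟩ := h
  refine ⟨Sum.inl u, Sum.inl v, Sum.inl w, ?_, ?_⟩
  · rintro (b | b)
    · simpa only [inN, LAT_ll, Sum.inl.injEq] using h1 b
    · have := h2 b
      simp only [inN, LAT_lr, reduceCtorEq, false_or]
      rcases not_and_or.mp this with hx | hrest
      · exact Or.inl ⟨fun e => hx (Or.inl e), fun a => hx (Or.inr a)⟩
      · rcases not_and_or.mp hrest with hy | hz
        · exact Or.inr (Or.inl ⟨fun e => hy (Or.inl e), fun a => hy (Or.inr a)⟩)
        · exact Or.inr (Or.inr ⟨fun e => hz (Or.inl e), fun a => hz (Or.inr a)⟩)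
  · rintro (b | b) ⟨g1, g2, g3⟩
    · simp only [inN, LAT_ll, Sum.inl.injEq] at g1 g2 g3
      exact h2 b ⟨g1, g2, g3⟩
    · simp only [inN, LAT_lr, reduceCtorEq, false_or] at g1 g2 g3
      rcases h1 b with hx | hy | hz
      · rcases hx with rfl | hx
        · exact g1.1 rfl
        · exact g1.2 hx
      · rcases hy with rfl | hy
        · exact g2.1 rfl
        · exact g2.2 hy
      · rcases hz with rfl | hz
        · exact g3.1 rfl
        · exact g3.2 hz

lemma dominationNumber_le_three_of_BB [Fintype V] {G : SimpleGraph V} (h : BB G) :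
    dominationNumber G ≤ 3 := by
  classical
  obtain ⟨u, v, w, h1, _⟩ := h
  have hmem : dominationNumber G ≤ ({u, v, w} : Finset V).card := by
    refine Nat.sInf_le ⟨{u, v, w}, ?_, rfl⟩
    intro b
    rcases h1 b with hx | hy | hz
    · exact ⟨u, by simp, hx⟩
    · exact ⟨v, by simp, hy⟩
    · exact ⟨w, by simp, hz⟩
  refine hmem.trans ?_
  have := Finset.card_insert_le u ({v, w} : Finset V)
  have := Finset.card_insert_le v ({w} : Finset V)
  simp only [Finset.card_singleton] at *
  omega

end Aux

/-- If `τ` is the second index with `s_τ = 0`, then for all `t ≥ τ + 1`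
the domination number of `ILM^t(S,G)` is at most `3`. -/
theorem dominationNumber_ILM_le_three {V : Type} [Fintype V] [Nonempty V] (G : SimpleGraph V)
    (S : ℕ → Bool) (τ₁ τ : ℕ) (hlt : τ₁ < τ) (hτ₁ : S τ₁ = false) (hτ : S τ = false)
    (hsecond : ∀ i < τ, i ≠ τ₁ → S i = true)
    (t : ℕ) (ht : τ + 1 ≤ t) :
    dominationNumber (ILM S G t) ≤ 3 := by
  have hstep : ∀ n, ILM S G (n + 1) =
      (if S n then LTstep (ILM S G n) else LATstep (ILM S G n)) := fun n => rfl
  have keyA : ∀ n, τ₁ + 1 ≤ n → AA (ILM S G n) := by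
    intro n
    induction n with
    | zero => omega
    | succ m ih =>
      intro hm
      rw [hstep m]
      cases hSm : S m with
      | false =>
        rw [if_neg Bool.false_ne_true]
        exact AA_LAT _
      | true =>
        rw [if_pos rfl]
        refine AA_LT (ih ?_)
        rcases Nat.lt_or_ge m (τ₁ + 1) with hlt' | hge
        · exfalso
          have : m = τ₁ := by omega
          rw [this, hτ₁] at hSm
          exact Bool.noConfusion hSm
        · exact hge
  have keyB : ∀ n, τ + 1 ≤ n → BB (ILM S G n) := by
    intro n
    induction n with
    | zero => omega
    | succ m ih =>
      intro hm
      rcases Nat.lt_or_ge m (τ + 1) with hlt' | hge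
      · have hmτ : m = τ := by omega
        subst hmτ
        rw [hstep m]
        rw [hτ, if_neg Bool.false_ne_true]
        exact BB_of_AA_LAT (keyA m (by omega))
      · rw [hstep m]
        cases hSm : S m with
        | false =>
          rw [if_neg Bool.false_ne_true]
          exact BB_LAT (ih hge)
        | true =>
          rw [if_pos rfl]
          exact BB_LT (ih hge)
  exact dominationNumber_le_three_of_BB (keyB t ht)
end

section
/- Let G be a finite simple graph. (i) If u and v are vertices of G whose closed neighborhoods partition the vertex set of G, then u and v also partition the vertex set of LAT(G), and u and v also partition the vertex set of LT(G). (ii) Conversely, if LT(G) contains a pair of vertices whose closed neighborhoods partition its vertex set, then G contains such a pair as well. -/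
open SimpleGraph

section Aux
variable {V : Type} (G : SimpleGraph V) (a b : V)

@[simp] lemma LTstep_adj_inl_inl : (LTstep G).Adj (Sum.inl a) (Sum.inl b) ↔ G.Adj a b := Iff.rfl
@[simp] lemma LTstep_adj_inl_inr : (LTstep G).Adj (Sum.inl a) (Sum.inr b) ↔ a = b ∨ G.Adj a b := Iff.rfl
@[simp] lemma LTstep_adj_inr_inl : (LTstep G).Adj (Sum.inr a) (Sum.inl b) ↔ b = a ∨ G.Adj b a := Iff.rfl
@[simp] lemma LTstep_adj_inr_inr : (LTstep G).Adj (Sum.inr a) (Sum.inr b) ↔ False := Iff.rfl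
@[simp] lemma LATstep_adj_inl_inl : (LATstep G).Adj (Sum.inl a) (Sum.inl b) ↔ G.Adj a b := Iff.rfl
@[simp] lemma LATstep_adj_inl_inr : (LATstep G).Adj (Sum.inl a) (Sum.inr b) ↔ a ≠ b ∧ ¬ G.Adj a b := Iff.rfl
@[simp] lemma LATstep_adj_inr_inl : (LATstep G).Adj (Sum.inr a) (Sum.inl b) ↔ b ≠ a ∧ ¬ G.Adj b a := Iff.rfl
@[simp] lemma LATstep_adj_inr_inr : (LATstep G).Adj (Sum.inr a) (Sum.inr b) ↔ False := Iff.rfl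

@[simp] lemma mem_closedNbhd (w : V) : w ∈ closedNbhd G a ↔ w = a ∨ G.Adj a w := by
  simp [closedNbhd]

end Aux

/-- (i) If the closed neighborhoods of `u` and `v` partition `V(G)`,
then `u` and `v` also partition the vertex sets of `LAT(G)` and of `LT(G)`.
(ii) Conversely, if `LT(G)` has a pair of vertices partitioning its vertex set,
then so does `G`. -/
theorem partitionsPair_LATstep_LTstep {V : Type} [Fintype V] (G : SimpleGraph V) :
    (∀ u v : V, PartitionsPair G u v →
      PartitionsPair (LATstep G) (Sum.inl u) (Sum.inl v) ∧
        PartitionsPair (LTstep G) (Sum.inl u) (Sum.inl v)) ∧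
      ((∃ x y : V ⊕ V, PartitionsPair (LTstep G) x y) → ∃ u v : V, PartitionsPair G u v) := by
  have hsym := fun (x y : V) => G.adj_comm x y
  constructor
  · rintro u v ⟨hu, hi⟩
    rw [Set.eq_univ_iff_forall] at hu
    rw [Set.eq_empty_iff_forall_notMem] at hi
    simp only [Set.mem_union, Set.mem_inter_iff, mem_closedNbhd] at hu hi
    refine ⟨⟨?_, ?_⟩, ?_, ?_⟩
    · rw [Set.eq_univ_iff_forall]
      rintro (w|w) <;>
        simp only [Set.mem_union, mem_closedNbhd, LATstep_adj_inl_inl,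
          LATstep_adj_inl_inr, Sum.inl.injEq, reduceCtorEq, ne_eq, false_or] <;>
        [exact hu w; · have h1 := hu w; have h2 := hi w; tauto]
    · rw [Set.eq_empty_iff_forall_notMem]
      rintro (w|w) <;>
        simp only [Set.mem_inter_iff, mem_closedNbhd, LATstep_adj_inl_inl,
          LATstep_adj_inl_inr, Sum.inl.injEq, reduceCtorEq, ne_eq, false_or, not_and] <;>
        [exact fun h1 h2 => hi w ⟨h1, h2⟩; · have h1 := hu w; have h2 := hi w; tauto]
    · rw [Set.eq_univ_iff_forall]
      rintro (w|w) <;>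
        simp only [Set.mem_union, mem_closedNbhd, LTstep_adj_inl_inl,
          LTstep_adj_inl_inr, Sum.inl.injEq, reduceCtorEq, false_or] <;>
        [exact hu w; · have h1 := hu w; tauto]
    · rw [Set.eq_empty_iff_forall_notMem]
      rintro (w|w) <;>
        simp only [Set.mem_inter_iff, mem_closedNbhd, LTstep_adj_inl_inl,
          LTstep_adj_inl_inr, Sum.inl.injEq, reduceCtorEq, false_or, not_and] <;>
        [exact fun h1 h2 => hi w ⟨h1, h2⟩; · have h2 := hi w; tauto]
  · rintro ⟨x, y, hu, hi⟩
    rw [Set.eq_univ_iff_forall] at hu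
    rw [Set.eq_empty_iff_forall_notMem] at hi
    refine ⟨Sum.elim id id x, Sum.elim id id y, ?_, ?_⟩
    · rw [Set.eq_univ_iff_forall]
      intro w
      have h := hu (Sum.inl w)
      rcases x with a|a <;> rcases y with b|b <;>
        simp only [Set.mem_union, mem_closedNbhd, LTstep_adj_inl_inl, LTstep_adj_inr_inl,
          Sum.inl.injEq, reduceCtorEq, false_or, Sum.elim_inl, Sum.elim_inr, id] at h ⊢ <;>
        tauto
    · rw [Set.eq_empty_iff_forall_notMem]
      intro w
      have h := hi (Sum.inl w)
      rcases x with a|a <;> rcases y with b|b <;>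
        simp only [Set.mem_inter_iff, mem_closedNbhd, LTstep_adj_inl_inl, LTstep_adj_inr_inl,
          Sum.inl.injEq, reduceCtorEq, false_or, Sum.elim_inl, Sum.elim_inr, id] at h ⊢ <;>
        tauto
end

section
/- Let G be a finite simple graph with at least one vertex. The graph LAT(G) is disconnected if and only if G has a dominating vertex, or G has exactly two connected components each of which induces a complete graph (i.e., G is the disjoint union of two complete graphs). -/
open SimpleGraph

section Aux

variable {V : Type} (G : SimpleGraph V)

lemma reach_const {W : Type} {H : SimpleGraph W} (f : W → Prop)
    (hf : ∀ x y, H.Adj x y → (f x ↔ f y)) {x y : W} (h : H.Reachable x y) :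
    f x ↔ f y := by
  obtain ⟨w⟩ := h
  induction w with
  | nil => exact Iff.rfl
  | cons h p ih => exact (hf _ _ h).trans ih

lemma inl_reach {u v : V} (h : G.Reachable u v) :
    (LATstep G).Reachable (Sum.inl u) (Sum.inl v) :=
  h.map ⟨Sum.inl, fun h => h⟩

lemma via_anticlone {u v w : V} (h1 : u ≠ w) (h2 : ¬ G.Adj u w)
    (h3 : v ≠ w) (h4 : ¬ G.Adj v w) :
    (LATstep G).Reachable (Sum.inl u) (Sum.inl v) := by
  have a1 : (LATstep G).Adj (Sum.inl u) (Sum.inr w) := ⟨h1, h2⟩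
  have a2 : (LATstep G).Adj (Sum.inl v) (Sum.inr w) := ⟨h3, h4⟩
  exact a1.reachable.trans a2.reachable.symm

lemma connected_of [Nonempty V]
    (hd : ¬ ∃ v : V, ∀ u : V, u ≠ v → G.Adj v u)
    (h2 : ¬ (Nat.card G.ConnectedComponent = 2 ∧
      ∀ u v : V, G.Reachable u v → u = v ∨ G.Adj u v)) :
    (LATstep G).Connected := by
  push_neg at hd
  have nadj : ∀ x y : V, ¬ G.Reachable x y → x ≠ y ∧ ¬ G.Adj x y := by
    intro x y h
    refine ⟨?_, fun ha => h ha.reachable⟩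
    rintro rfl
    exact h (Reachable.refl x)
  have inlmain : ∀ u v : V, (LATstep G).Reachable (Sum.inl u) (Sum.inl v) := by
    intro u v
    by_cases hr : G.Reachable u v
    · exact inl_reach G hr
    by_cases hw : ∃ w, ¬ G.Reachable u w ∧ ¬ G.Reachable v w
    · obtain ⟨w, hw1, hw2⟩ := hw
      exact via_anticlone G (nadj u w hw1).1 (nadj u w hw1).2
        (nadj v w hw2).1 (nadj v w hw2).2
    · have hall : ∀ w, G.Reachable u w ∨ G.Reachable v w := by
        intro w
        by_contra hc
        push_neg at hc
        exact hw ⟨w, hc.1, hc.2⟩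
      have hcard : Nat.card G.ConnectedComponent = 2 := by
        rw [Nat.card_eq_two_iff]
        refine ⟨G.connectedComponentMk u, G.connectedComponentMk v,
          fun h => hr (ConnectedComponent.exact h), ?_⟩
        apply Set.eq_univ_of_forall
        intro c
        obtain ⟨w, hwc⟩ := c.exists_rep
        rcases hall w with h | h
        · exact Or.inl (hwc ▸ (ConnectedComponent.sound h).symm)
        · exact Or.inr (hwc ▸ (ConnectedComponent.sound h).symm)
      have hncl : ¬ ∀ u v : V, G.Reachable u v → u = v ∨ G.Adj u v :=
        fun h => h2 ⟨hcard, h⟩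
      push_neg at hncl
      obtain ⟨a, b, hab, hne, hnadj⟩ := hncl
      rcases hall a with ha | ha
      · -- a (and b) in component of u; v not reachable to a
        have hva : ¬ G.Reachable v a := fun h => hr (h.trans ha.symm).symm
        have h1 : (LATstep G).Reachable (Sum.inl v) (Sum.inl b) :=
          via_anticlone G (nadj v a hva).1 (nadj v a hva).2
            (Ne.symm hne) (fun h => hnadj h.symm)
        exact (inl_reach G (ha.trans hab)).trans h1.symm
      · have hua : ¬ G.Reachable u a := fun h => hr (h.trans ha.symm)
        have h1 : (LATstep G).Reachable (Sum.inl u) (Sum.inl b) :=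
          via_anticlone G (nadj u a hua).1 (nadj u a hua).2
            (Ne.symm hne) (fun h => hnadj h.symm)
        exact h1.trans (inl_reach G (ha.trans hab)).symm
  have inr_step : ∀ a : V, ∃ u : V, (LATstep G).Adj (Sum.inr a) (Sum.inl u) := by
    intro a
    obtain ⟨u, hu1, hu2⟩ := hd a
    exact ⟨u, hu1, fun h => hu2 h.symm⟩
  constructor
  rintro (a | a) (b | b)
  · exact inlmain a b
  · obtain ⟨u, hu⟩ := inr_step b
    exact (inlmain a u).trans hu.reachable.symm
  · obtain ⟨u, hu⟩ := inr_step a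
    exact hu.reachable.trans (inlmain u b)
  · obtain ⟨u, hu⟩ := inr_step a
    obtain ⟨w, hw⟩ := inr_step b
    exact hu.reachable.trans ((inlmain u w).trans hw.reachable.symm)

lemma disc_of_dom {v : V} (hv : ∀ u : V, u ≠ v → G.Adj v u) :
    ¬ (LATstep G).Connected := by
  intro h
  have noadj : ∀ x : V ⊕ V, ¬ (LATstep G).Adj (Sum.inr v) x := by
    rintro (b | b) hb
    · exact hb.2 ((hv b hb.1).symm)
    · exact hb
  obtain ⟨w⟩ := h.preconnected (Sum.inr v) (Sum.inl v)
  cases w with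
  | cons h' p => exact noadj _ h' 

lemma disc_of_two_cliques (hcard : Nat.card G.ConnectedComponent = 2)
    (hcl : ∀ u v : V, G.Reachable u v → u = v ∨ G.Adj u v) :
    ¬ (LATstep G).Connected := by
  obtain ⟨c1, c2, hne, huniv⟩ := Nat.card_eq_two_iff.mp hcard
  have hmem : ∀ c : G.ConnectedComponent, c = c1 ∨ c = c2 := by
    intro c
    have : c ∈ ({c1, c2} : Set G.ConnectedComponent) := huniv ▸ Set.mem_univ c
    exact this
  set f : V ⊕ V → Prop := fun x =>
    match x with
    | Sum.inl a => G.connectedComponentMk a = c1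
    | Sum.inr a => G.connectedComponentMk a ≠ c1 with hf
  have key : ∀ x y, (LATstep G).Adj x y → (f x ↔ f y) := by
    have neqcomp : ∀ a b : V, a ≠ b → ¬ G.Adj a b →
        G.connectedComponentMk a ≠ G.connectedComponentMk b := by
      intro a b h1 h2 hc
      rcases hcl a b (ConnectedComponent.exact hc) with h | h
      · exact h1 h
      · exact h2 h
    have cross : ∀ a b : V, a ≠ b → ¬ G.Adj a b →
        ((G.connectedComponentMk a = c1) ↔ (G.connectedComponentMk b ≠ c1)) := by
      intro a b h1 h2
      have hab := neqcomp a b h1 h2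
      constructor
      · intro h hb
        exact hab (h.trans hb.symm)
      · intro h
        rcases hmem (G.connectedComponentMk a) with ha | ha
        · exact ha
        · rcases hmem (G.connectedComponentMk b) with hb | hb
          · exact absurd hb h
          · exact absurd (ha.trans hb.symm) hab
    rintro (a | a) (b | b) h
    · have h' : G.Adj a b := h
      show G.connectedComponentMk a = c1 ↔ G.connectedComponentMk b = c1
      rw [ConnectedComponent.sound h'.reachable]
    · exact cross a b h.1 h.2
    · exact (cross b a h.1 h.2).symm
    · exact h.elim
  intro h
  obtain ⟨u, hu⟩ := c1.exists_rep
  obtain ⟨v, hv⟩ := c2.exists_rep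
  have hu' : G.connectedComponentMk u = c1 := hu
  have hv' : G.connectedComponentMk v = c2 := hv
  have key2 : G.connectedComponentMk u = c1 ↔ G.connectedComponentMk v = c1 :=
    reach_const f key (h.preconnected (Sum.inl u) (Sum.inl v))
  exact hne ((key2.mp hu').symm.trans hv')

end Aux

/-- `LAT(G)` is disconnected iff `G` has a dominating vertex, or `G`
has exactly two connected components, each inducing a complete graph. -/
theorem LATstep_disconnected_iff {V : Type} [Fintype V] [Nonempty V] (G : SimpleGraph V) :
    ¬ (LATstep G).Connected ↔
      ((∃ v : V, ∀ u : V, u ≠ v → G.Adj v u) ∨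
        (Nat.card G.ConnectedComponent = 2 ∧
          ∀ u v : V, G.Reachable u v → u = v ∨ G.Adj u v)) := by
  constructor
  · intro hnc
    by_contra hP
    exact hnc (connected_of G (fun h => hP (Or.inl h)) (fun h => hP (Or.inr h)))
  · rintro (⟨v, hv⟩ | ⟨hcard, hcl⟩)
    · exact disc_of_dom G hv
    · exact disc_of_two_cliques G hcard hcl
end

section
/- Let G be a finite simple graph with domination number γ(G) ≥ 3. Then LAT(G) is connected and has diameter at most 3. -/
open SimpleGraph

lemma exists_undominated {V : Type} [Fintype V] (G : SimpleGraph V)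
    (h : 3 ≤ dominationNumber G) (u v : V) :
    ∃ w, (w ≠ u ∧ ¬ G.Adj u w) ∧ (w ≠ v ∧ ¬ G.Adj v w) := by
  classical
  by_contra hc
  simp only [not_exists] at hc
  have hdom : IsDominatingSet G {u, v} := by
    intro w
    rcases em (w = u) with hwu | hwu
    · exact ⟨u, Finset.mem_insert_self _ _, Or.inl hwu.symm⟩
    rcases em (G.Adj u w) with hA | hA
    · exact ⟨u, Finset.mem_insert_self _ _, Or.inr hA⟩
    have hv : v ∈ ({u, v} : Finset V) := Finset.mem_insert_of_mem (Finset.mem_singleton_self v)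
    rcases em (w = v) with hwv | hwv
    · exact ⟨v, hv, Or.inl hwv.symm⟩
    · refine ⟨v, hv, Or.inr ?_⟩
      by_contra hB
      exact hc w ⟨⟨hwu, hA⟩, ⟨hwv, hB⟩⟩
  have hle : dominationNumber G ≤ ({u, v} : Finset V).card :=
    Nat.sInf_le ⟨{u, v}, hdom, rfl⟩
  have hcard : ({u, v} : Finset V).card ≤ 2 := (Finset.card_insert_le _ _).trans (by simp)
  omega

/-- If `γ(G) ≥ 3`, then `LAT(G)` is connected with diameter at most `3`. -/
theorem LATstep_diameter_le_three {V : Type} [Fintype V] [Nonempty V] (G : SimpleGraph V)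
    (h : 3 ≤ dominationNumber G) :
    (LATstep G).Connected ∧ (LATstep G).ediam ≤ 3 := by
  have adjIR : ∀ a w : V, w ≠ a → ¬ G.Adj a w → (LATstep G).Adj (Sum.inl a) (Sum.inr w) :=
    fun a w h1 h2 => ⟨h1.symm, h2⟩
  have adjRI : ∀ w a : V, w ≠ a → ¬ G.Adj a w → (LATstep G).Adj (Sum.inr a) (Sum.inl w) :=
    fun w a h1 h2 => ⟨h1, fun hh => h2 (G.adj_symm hh)⟩
  have wLR : ∀ a b : V, ∃ p : (LATstep G).Walk (Sum.inl a) (Sum.inr b), p.length ≤ 3 := by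
    intro a b
    obtain ⟨y, ⟨hy1, hy2⟩, -⟩ := exists_undominated G h a a
    obtain ⟨z, ⟨hz1, hz2⟩, hz3, hz4⟩ := exists_undominated G h y b
    exact ⟨Walk.cons (adjIR a y hy1 hy2)
      (Walk.cons (adjRI z y hz1 hz2)
      (Walk.cons (adjIR z b hz3.symm (fun hh => hz4 (G.adj_symm hh))) Walk.nil)),
      by simp⟩
  have key : ∀ x y : V ⊕ V, ∃ p : (LATstep G).Walk x y, p.length ≤ 3 := by
    rintro (a | a) (b | b)
    · obtain ⟨w, ⟨h1, h2⟩, h3, h4⟩ := exists_undominated G h a b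
      exact ⟨Walk.cons (adjIR a w h1 h2) (Walk.cons (adjRI b w h3.symm (fun hh => h4 (G.adj_symm hh))) Walk.nil), by simp⟩
    · exact wLR a b
    · obtain ⟨p, hp⟩ := wLR b a
      exact ⟨p.reverse, by simpa using hp⟩
    · obtain ⟨w, ⟨h1, h2⟩, h3, h4⟩ := exists_undominated G h a b
      exact ⟨Walk.cons (adjRI w a h1 h2)
        (Walk.cons (adjIR w b h3.symm (fun hh => h4 (G.adj_symm hh))) Walk.nil), by simp⟩
  constructor
  · exact ⟨fun x y => by obtain ⟨p, -⟩ := key x y; exact p.reachable⟩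
  · apply SimpleGraph.ediam_le_of_edist_le
    intro u v
    obtain ⟨p, hp⟩ := key u v
    calc (LATstep G).edist u v ≤ p.length := p.edist_le
      _ ≤ 3 := by exact_mod_cast hp
end

section
/- Let G be a finite simple graph with minimum degree δ ≥ 1. Then the clustering coefficient satisfies C(LT(G)) ≥ (7/8 − 3/(8δ)) · C(G). -/
open SimpleGraph

section AuxLT

variable {V : Type} (G : SimpleGraph V) [DecidableRel G.Adj]

private lemma LT_nat_card_dart {W : Type} [Finite W] (H : SimpleGraph W) :
    Nat.card H.Dart = 2 * Nat.card H.edgeSet := by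
  classical
  cases nonempty_fintype W
  rw [Nat.card_eq_fintype_card, SimpleGraph.dart_card_eq_twice_card_edges, edgeFinset_card,
    Nat.card_eq_fintype_card]

private lemma LT_lcc_nonneg {W : Type} (H : SimpleGraph W) (x : W) :
    0 ≤ localClusteringCoeff H x :=
  div_nonneg (Nat.cast_nonneg _) (Nat.cast_nonneg _)

omit [DecidableRel G.Adj] in
private lemma LT_card_nbhd_inr [Fintype V] (x : V) :
    Nat.card ((LTstep G).neighborSet (Sum.inr x)) = Nat.card (G.neighborSet x) + 1 := by
  have hset : (LTstep G).neighborSet (Sum.inr x) = Sum.inl '' (insert x (G.neighborSet x)) := by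
    ext (y|y) <;> simp [LTstep, SimpleGraph.neighborSet, SimpleGraph.adj_comm, eq_comm]
  rw [Nat.card_coe_set_eq, Nat.card_coe_set_eq, hset,
    Set.ncard_image_of_injective _ Sum.inl_injective,
    Set.ncard_insert_of_notMem (G.notMem_neighborSet_self (a := x)) (Set.toFinite _)]

omit [DecidableRel G.Adj] in
private lemma LT_card_nbhd_inl [Fintype V] (x : V) :
    Nat.card ((LTstep G).neighborSet (Sum.inl x)) = 2 * Nat.card (G.neighborSet x) + 1 := by
  have hset : (LTstep G).neighborSet (Sum.inl x) =
      Sum.inl '' (G.neighborSet x) ∪ Sum.inr '' (insert x (G.neighborSet x)) := by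
    ext (y|y) <;> simp [LTstep, SimpleGraph.neighborSet, SimpleGraph.adj_comm, eq_comm]
  rw [Nat.card_coe_set_eq, Nat.card_coe_set_eq, hset,
    Set.ncard_union_eq (by simp [Set.disjoint_left]) (Set.toFinite _) (Set.toFinite _),
    Set.ncard_image_of_injective _ Sum.inl_injective,
    Set.ncard_image_of_injective _ Sum.inr_injective,
    Set.ncard_insert_of_notMem (G.notMem_neighborSet_self (a := x)) (Set.toFinite _)]
  ring

private def LTcloneDartMap (x : V) :
    (G.induce (G.neighborSet x)).Dart ⊕ (↥(G.neighborSet x) ⊕ ↥(G.neighborSet x)) →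
      ((LTstep G).induce ((LTstep G).neighborSet (Sum.inr x))).Dart
  | Sum.inl d => ⟨(⟨Sum.inl ↑d.fst, Or.inr (G.adj_symm d.fst.2)⟩,
      ⟨Sum.inl ↑d.snd, Or.inr (G.adj_symm d.snd.2)⟩), d.adj⟩
  | Sum.inr (Sum.inl c) => ⟨(⟨Sum.inl x, Or.inl rfl⟩, ⟨Sum.inl ↑c, Or.inr (G.adj_symm c.2)⟩), c.2⟩
  | Sum.inr (Sum.inr c) => ⟨(⟨Sum.inl ↑c, Or.inr (G.adj_symm c.2)⟩, ⟨Sum.inl x, Or.inl rfl⟩),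
      G.adj_symm c.2⟩

omit [DecidableRel G.Adj] in
private lemma LTcloneDartMap_inj (x : V) : Function.Injective (LTcloneDartMap G x) := by
  rintro (⟨⟨⟨a,ha⟩,⟨b,hb⟩⟩,hab⟩|(⟨a,ha⟩|⟨a,ha⟩)) (⟨⟨⟨a',ha'⟩,⟨b',hb'⟩⟩,ha'b'⟩|(⟨a',ha'⟩|⟨a',ha'⟩)) h <;>
    simp only [LTcloneDartMap, SimpleGraph.Dart.mk.injEq, Prod.mk.injEq, Subtype.mk.injEq, SimpleGraph.Dart.ext_iff, Subtype.ext_iff,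
      Sum.inl.injEq] at h
  · obtain ⟨rfl, rfl⟩ := h; rfl
  · rw [h.1] at ha; exact absurd ha (G.notMem_neighborSet_self)
  · rw [h.2] at hb; exact absurd hb (G.notMem_neighborSet_self)
  · rw [← h.1] at ha'; exact absurd ha' (G.notMem_neighborSet_self)
  · obtain ⟨-, rfl⟩ := h; rfl
  · rw [← h.1] at ha'; exact absurd ha' (G.notMem_neighborSet_self)
  · rw [← h.2] at hb'; exact absurd hb' (G.notMem_neighborSet_self)
  · rw [h.1] at ha; exact absurd ha (G.notMem_neighborSet_self)
  · obtain ⟨rfl, -⟩ := h; rfl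

private def LTvertDartMap (x : V) :
    ((G.induce (G.neighborSet x)).Dart ⊕ (G.induce (G.neighborSet x)).Dart ⊕
        (G.induce (G.neighborSet x)).Dart) ⊕
      ((↥(G.neighborSet x) ⊕ ↥(G.neighborSet x)) ⊕ (↥(G.neighborSet x) ⊕ ↥(G.neighborSet x))) →
      ((LTstep G).induce ((LTstep G).neighborSet (Sum.inl x))).Dart
  | Sum.inl (Sum.inl d) =>
      ⟨(⟨Sum.inl ↑d.fst, d.fst.2⟩, ⟨Sum.inl ↑d.snd, d.snd.2⟩), d.adj⟩
  | Sum.inl (Sum.inr (Sum.inl d)) =>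
      ⟨(⟨Sum.inl ↑d.fst, d.fst.2⟩, ⟨Sum.inr ↑d.snd, Or.inr d.snd.2⟩), Or.inr d.adj⟩
  | Sum.inl (Sum.inr (Sum.inr d)) =>
      ⟨(⟨Sum.inr ↑d.fst, Or.inr d.fst.2⟩, ⟨Sum.inl ↑d.snd, d.snd.2⟩), Or.inr (G.adj_symm d.adj)⟩
  | Sum.inr (Sum.inl (Sum.inl c)) =>
      ⟨(⟨Sum.inl ↑c, c.2⟩, ⟨Sum.inr ↑c, Or.inr c.2⟩), Or.inl rfl⟩
  | Sum.inr (Sum.inl (Sum.inr c)) =>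
      ⟨(⟨Sum.inr ↑c, Or.inr c.2⟩, ⟨Sum.inl ↑c, c.2⟩), Or.inl rfl⟩
  | Sum.inr (Sum.inr (Sum.inl c)) =>
      ⟨(⟨Sum.inl ↑c, c.2⟩, ⟨Sum.inr x, Or.inl rfl⟩), Or.inr (G.adj_symm c.2)⟩
  | Sum.inr (Sum.inr (Sum.inr c)) =>
      ⟨(⟨Sum.inr x, Or.inl rfl⟩, ⟨Sum.inl ↑c, c.2⟩), Or.inr (G.adj_symm c.2)⟩

omit [DecidableRel G.Adj] in
private lemma LTvertDartMap_inj (x : V) : Function.Injective (LTvertDartMap G x) := by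
  rintro ((⟨⟨⟨a,ha⟩,⟨b,hb⟩⟩,hab⟩|⟨⟨⟨a,ha⟩,⟨b,hb⟩⟩,hab⟩|⟨⟨⟨a,ha⟩,⟨b,hb⟩⟩,hab⟩)|
      ((⟨a,ha⟩|⟨a,ha⟩)|(⟨a,ha⟩|⟨a,ha⟩)))
    ((⟨⟨⟨a',ha'⟩,⟨b',hb'⟩⟩,ha'b'⟩|⟨⟨⟨a',ha'⟩,⟨b',hb'⟩⟩,ha'b'⟩|⟨⟨⟨a',ha'⟩,⟨b',hb'⟩⟩,ha'b'⟩)|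
      ((⟨a',ha'⟩|⟨a',ha'⟩)|(⟨a',ha'⟩|⟨a',ha'⟩))) h <;>
    simp only [LTvertDartMap, SimpleGraph.Dart.mk.injEq, Prod.mk.injEq, Subtype.mk.injEq, SimpleGraph.Dart.ext_iff, Subtype.ext_iff,
      Sum.inl.injEq, Sum.inr.injEq, reduceCtorEq, false_and, and_false, true_and, and_true,
      eq_self_iff_true] at h
  all_goals first
      | (exact h.elim)
      | rfl
      | (obtain ⟨rfl, rfl⟩ := h; rfl)
      | (obtain ⟨rfl, -⟩ := h; rfl)
      | (obtain ⟨-, rfl⟩ := h; rfl)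
      | (obtain rfl := h; rfl)
      | (rw [h.1] at ha; exact absurd ha (G.notMem_neighborSet_self))
      | (rw [← h.1] at ha; exact absurd ha (G.notMem_neighborSet_self))
      | (rw [h.2] at ha; exact absurd ha (G.notMem_neighborSet_self))
      | (rw [← h.2] at ha; exact absurd ha (G.notMem_neighborSet_self))
      | (rw [h.1] at hb; exact absurd hb (G.notMem_neighborSet_self))
      | (rw [← h.1] at hb; exact absurd hb (G.notMem_neighborSet_self))
      | (rw [h.2] at hb; exact absurd hb (G.notMem_neighborSet_self))
      | (rw [← h.2] at hb; exact absurd hb (G.notMem_neighborSet_self))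
      | (rw [h.1] at ha'; exact absurd ha' (G.notMem_neighborSet_self))
      | (rw [← h.1] at ha'; exact absurd ha' (G.notMem_neighborSet_self))
      | (rw [h.2] at ha'; exact absurd ha' (G.notMem_neighborSet_self))
      | (rw [← h.2] at ha'; exact absurd ha' (G.notMem_neighborSet_self))
      | (rw [h.1] at hb'; exact absurd hb' (G.notMem_neighborSet_self))
      | (rw [← h.1] at hb'; exact absurd hb' (G.notMem_neighborSet_self))
      | (rw [h.2] at hb'; exact absurd hb' (G.notMem_neighborSet_self))
      | (rw [← h.2] at hb'; exact absurd hb' (G.notMem_neighborSet_self))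
      | (rw [h] at ha; exact absurd ha (G.notMem_neighborSet_self))
      | (rw [← h] at ha; exact absurd ha (G.notMem_neighborSet_self))
      | (rw [h] at ha'; exact absurd ha' (G.notMem_neighborSet_self))
      | (rw [← h] at ha'; exact absurd ha' (G.notMem_neighborSet_self))
      | (exact absurd (h.1.trans h.2.symm) (SimpleGraph.ne_of_adj G (show G.Adj a b from hab)))
      | (exact absurd (h.2.trans h.1.symm) (SimpleGraph.ne_of_adj G (show G.Adj a b from hab)))
      | (exact absurd (h.1.symm.trans h.2) (SimpleGraph.ne_of_adj G (show G.Adj a' b' from ha'b')))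
      | (exact absurd (h.2.symm.trans h.1) (SimpleGraph.ne_of_adj G (show G.Adj a' b' from ha'b')))

omit [DecidableRel G.Adj] in
private lemma LT_edge_lb_inr [Fintype V] (x : V) :
    Nat.card (G.induce (G.neighborSet x)).edgeSet + Nat.card (G.neighborSet x)
      ≤ Nat.card ((LTstep G).induce ((LTstep G).neighborSet (Sum.inr x))).edgeSet := by
  classical
  have h1 := Nat.card_le_card_of_injective _ (LTcloneDartMap_inj G x)
  simp only [Nat.card_sum, LT_nat_card_dart] at h1
  omega

omit [DecidableRel G.Adj] in
private lemma LT_edge_lb_inl [Fintype V] (x : V) :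
    3 * Nat.card (G.induce (G.neighborSet x)).edgeSet + 2 * Nat.card (G.neighborSet x)
      ≤ Nat.card ((LTstep G).induce ((LTstep G).neighborSet (Sum.inl x))).edgeSet := by
  classical
  have h1 := Nat.card_le_card_of_injective _ (LTvertDartMap_inj G x)
  simp only [Nat.card_sum, LT_nat_card_dart] at h1
  omega

private lemma LT_key [Fintype V] (hδ : 1 ≤ G.minDegree) (x : V) :
    (7 / 4 - 3 / (4 * (G.minDegree : ℝ))) * localClusteringCoeff G x ≤
      localClusteringCoeff (LTstep G) (Sum.inl x) + localClusteringCoeff (LTstep G) (Sum.inr x) := by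
  classical
  set d := Nat.card (G.neighborSet x) with hd
  set e := Nat.card (G.induce (G.neighborSet x)).edgeSet with he
  have hδR : (1 : ℝ) ≤ (G.minDegree : ℝ) := by exact_mod_cast hδ
  have hδpos : (0 : ℝ) < (G.minDegree : ℝ) := by linarith
  have hcoef : (0 : ℝ) ≤ 7 / 4 - 3 / (4 * (G.minDegree : ℝ)) := by
    have : 3 / (4 * (G.minDegree : ℝ)) ≤ 3 / 4 := by
      apply div_le_div_of_nonneg_left (by norm_num) (by norm_num)
      linarith
    linarith
  by_cases hd2 : d < 2
  · have h0 : d.choose 2 = 0 := Nat.choose_eq_zero_of_lt hd2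
    have hG0 : localClusteringCoeff G x = 0 := by
      unfold localClusteringCoeff
      rw [← hd, ← he, h0]
      simp
    rw [hG0, mul_zero]
    exact add_nonneg (LT_lcc_nonneg _ _) (LT_lcc_nonneg _ _)
  · push_neg at hd2
    have hdeg : d = G.degree x := by
      rw [hd, Nat.card_eq_fintype_card, SimpleGraph.card_neighborSet_eq_degree]
    have hδd : G.minDegree ≤ d := hdeg ▸ G.minDegree_le_degree x
    have hemax : e ≤ d.choose 2 := by
      have h1 := SimpleGraph.card_edgeFinset_le_card_choose_two
        (G := G.induce (G.neighborSet x))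
      rw [edgeFinset_card] at h1
      rw [he, Nat.card_eq_fintype_card]
      rw [show Fintype.card ↥(G.neighborSet x) = d by rw [hd, Nat.card_eq_fintype_card]] at h1
      exact h1
    -- lower bounds on the two local clustering coefficients
    have hinr : ((e + d : ℕ) : ℝ) / (((d + 1).choose 2 : ℕ) : ℝ) ≤
        localClusteringCoeff (LTstep G) (Sum.inr x) := by
      unfold localClusteringCoeff
      rw [LT_card_nbhd_inr, ← hd]
      gcongr
      exact_mod_cast LT_edge_lb_inr G x
    have hinl : ((3 * e + 2 * d : ℕ) : ℝ) / (((2 * d + 1).choose 2 : ℕ) : ℝ) ≤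
        localClusteringCoeff (LTstep G) (Sum.inl x) := by
      unfold localClusteringCoeff
      rw [LT_card_nbhd_inl, ← hd]
      gcongr
      exact_mod_cast LT_edge_lb_inl G x
    have hGval : localClusteringCoeff G x = (e : ℝ) / ((d.choose 2 : ℕ) : ℝ) := by
      unfold localClusteringCoeff
      rw [← hd, ← he]
    rw [hGval]
    refine le_trans ?_ (add_le_add hinl hinr)
    -- now pure real arithmetic
    have hD2 : (2 : ℝ) ≤ (d : ℝ) := by exact_mod_cast hd2
    have hδD : (G.minDegree : ℝ) ≤ (d : ℝ) := by exact_mod_cast hδd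
    set D : ℝ := (d : ℝ) with hD
    set E : ℝ := (e : ℝ) with hE
    have hE0 : (0 : ℝ) ≤ E := Nat.cast_nonneg _
    have hEmax : E ≤ D * (D - 1) / 2 := by
      have := (Nat.cast_le (α := ℝ)).mpr hemax
      rwa [Nat.cast_choose_two] at this
    have hc2 : ((d.choose 2 : ℕ) : ℝ) = D * (D - 1) / 2 := Nat.cast_choose_two ℝ d
    have hc3 : (((d + 1).choose 2 : ℕ) : ℝ) = (D + 1) * D / 2 := by
      rw [Nat.cast_choose_two]
      push_cast
      ring
    have hc4 : (((2 * d + 1).choose 2 : ℕ) : ℝ) = (2 * D + 1) * (2 * D) / 2 := by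
      rw [Nat.cast_choose_two]
      push_cast
      ring
    rw [hc2, hc3, hc4]
    push_cast
    have hDpos : (0 : ℝ) < D := by linarith
    have hD1 : (0 : ℝ) < D - 1 := by linarith
    have step1 : (7 / 4 - 3 / (4 * (G.minDegree : ℝ))) * (E / (D * (D - 1) / 2)) ≤
        (7 / 4 - 3 / (4 * D)) * (E / (D * (D - 1) / 2)) := by
      apply mul_le_mul_of_nonneg_right _ (by positivity)
      have : 3 / (4 * D) ≤ 3 / (4 * (G.minDegree : ℝ)) := by
        apply div_le_div_of_nonneg_left (by norm_num) (by linarith)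
        linarith
      linarith
    refine le_trans step1 ?_
    have lhs_eq : (7 / 4 - 3 / (4 * D)) * (E / (D * (D - 1) / 2)) =
        ((7 * D - 3) * E) / (2 * D * D * (D - 1)) := by
      field_simp
      ring
    have rhs_eq : (3 * E + 2 * D) / ((2 * D + 1) * (2 * D) / 2) + (E + D) / ((D + 1) * D / 2) =
        ((3 * E + 2 * D) * (D + 1) + (E + D) * (2 * (2 * D + 1))) / (D * (2 * D + 1) * (D + 1)) := by
      field_simp
    rw [lhs_eq, rhs_eq, div_le_div_iff₀ (by positivity) (by positivity)]
    have h19 : (0 : ℝ) ≤ 19 * D ^ 2 + 8 * D - 3 := by nlinarith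
    have hsub : (0 : ℝ) ≤ D * (D - 1) / 2 - E := by linarith
    have h5 : (0 : ℝ) ≤ 5 * D ^ 2 + 8 * D + 3 := by positivity
    have ht1 : (0 : ℝ) ≤ D * (19 * D ^ 2 + 8 * D - 3) * (D * (D - 1) / 2 - E) :=
      mul_nonneg (mul_nonneg hDpos.le h19) hsub
    have ht2 : (0 : ℝ) ≤ D ^ 2 * (D - 1) * (5 * D ^ 2 + 8 * D + 3) / 2 :=
      div_nonneg (mul_nonneg (mul_nonneg (by positivity) hD1.le) h5) (by norm_num)
    linarith [ht1, ht2]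

end AuxLT

/-- If `G` has minimum degree `δ ≥ 1`, then
`C(LT(G)) ≥ (7/8 - 3/(8δ)) · C(G)`. -/
theorem clusteringCoeff_LTstep {V : Type} [Fintype V] [Nonempty V] (G : SimpleGraph V)
    [DecidableRel G.Adj] (hδ : 1 ≤ G.minDegree) :
    (7 / 8 - 3 / (8 * (G.minDegree : ℝ))) * clusteringCoeff G ≤ clusteringCoeff (LTstep G) := by
  classical
  have hn : 0 < Fintype.card V := Fintype.card_pos
  have hnR : (0 : ℝ) < (Fintype.card V : ℝ) := by exact_mod_cast hn
  have hδR : (1 : ℝ) ≤ (G.minDegree : ℝ) := by exact_mod_cast hδ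
  have hδ0 : (G.minDegree : ℝ) ≠ 0 := by linarith
  have hsum : (7 / 4 - 3 / (4 * (G.minDegree : ℝ))) * ∑ x : V, localClusteringCoeff G x ≤
      (∑ x : V, localClusteringCoeff (LTstep G) (Sum.inl x)) +
        ∑ x : V, localClusteringCoeff (LTstep G) (Sum.inr x) := by
    rw [Finset.mul_sum, ← Finset.sum_add_distrib]
    exact Finset.sum_le_sum fun x _ => LT_key G hδ x
  unfold clusteringCoeff
  rw [Fintype.sum_sum_type, Fintype.card_sum]
  push_cast
  have h2n : (0 : ℝ) < (Fintype.card V : ℝ) + (Fintype.card V : ℝ) := by linarith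
  calc (7 / 8 - 3 / (8 * (G.minDegree : ℝ))) *
        ((∑ x : V, localClusteringCoeff G x) / (Fintype.card V : ℝ))
      = ((7 / 4 - 3 / (4 * (G.minDegree : ℝ))) * ∑ x : V, localClusteringCoeff G x) /
          ((Fintype.card V : ℝ) + (Fintype.card V : ℝ)) := by
        field_simp
        ring
    _ ≤ ((∑ x : V, localClusteringCoeff (LTstep G) (Sum.inl x)) +
          ∑ x : V, localClusteringCoeff (LTstep G) (Sum.inr x)) /
          ((Fintype.card V : ℝ) + (Fintype.card V : ℝ)) := by
        exact (div_le_div_iff_of_pos_right h2n).mpr hsum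
end

section
/- Let G be a finite simple graph with minimum degree at least 1 and clustering coefficient C(G) > 0. Then there exists a constant c > 0 (depending on G) such that for all t ≥ 1, the clustering coefficient satisfies C(ILT^t(G)) ≥ c · (7/8)^t · t^{−3/7}. -/
open SimpleGraph

section ILTAux

open Finset

variable {W : Type} [Fintype W] (H : SimpleGraph W)

@[simp] lemma LT_adj_ll {a b : W} : (LTstep H).Adj (Sum.inl a) (Sum.inl b) ↔ H.Adj a b := Iff.rfl
@[simp] lemma LT_adj_lr {a b : W} :
    (LTstep H).Adj (Sum.inl a) (Sum.inr b) ↔ a = b ∨ H.Adj a b := Iff.rfl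
@[simp] lemma LT_adj_rl {a b : W} :
    (LTstep H).Adj (Sum.inr a) (Sum.inl b) ↔ b = a ∨ H.Adj b a := Iff.rfl

@[simp] lemma LT_adj_rr {a b : W} : ¬ (LTstep H).Adj (Sum.inr a) (Sum.inr b) := fun h => h

lemma nat_card_dart_eq (K : SimpleGraph W) : Nat.card K.Dart = 2 * Nat.card K.edgeSet := by
  classical
  rw [Nat.card_eq_fintype_card, Nat.card_eq_fintype_card, dart_card_eq_twice_card_edges,
    edgeFinset, Set.toFinset_card]

lemma LT_nbhd_inl (x : W) : (LTstep H).neighborSet (Sum.inl x)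
    = Sum.inl '' (H.neighborSet x) ∪ Sum.inr '' (insert x (H.neighborSet x)) := by
  ext (y|y)
  · simp [mem_neighborSet]
  · simp only [mem_neighborSet, LT_adj_lr, Set.mem_union, Set.mem_image, Set.mem_insert_iff,
      Sum.inr.injEq, Sum.inl.injEq, exists_eq_right, reduceCtorEq, exists_false, false_or,
      and_false, or_false]
    exact or_congr_left eq_comm

lemma LT_nbhd_inr (x : W) : (LTstep H).neighborSet (Sum.inr x)
    = Sum.inl '' (insert x (H.neighborSet x)) := by
  ext (y|y)
  · simp only [mem_neighborSet, LT_adj_rl, Set.mem_image, Set.mem_insert_iff,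
      Sum.inl.injEq, exists_eq_right]
    exact or_congr_right ⟨fun h => h.symm, fun h => h.symm⟩
  · simp [mem_neighborSet]

lemma card_nbhd_inl (x : W) : Nat.card ((LTstep H).neighborSet (Sum.inl x))
    = 2 * Nat.card (H.neighborSet x) + 1 := by
  rw [Nat.card_coe_set_eq, Nat.card_coe_set_eq, LT_nbhd_inl,
    Set.ncard_union_eq (by simp [Set.disjoint_left]) (Set.toFinite _) (Set.toFinite _),
    Set.ncard_image_of_injective _ Sum.inl_injective,
    Set.ncard_image_of_injective _ Sum.inr_injective,
    Set.ncard_insert_of_notMem (s := H.neighborSet x) (fun h => H.irrefl h) (Set.toFinite _)]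
  ring

lemma card_nbhd_inr (x : W) : Nat.card ((LTstep H).neighborSet (Sum.inr x))
    = Nat.card (H.neighborSet x) + 1 := by
  rw [Nat.card_coe_set_eq, Nat.card_coe_set_eq, LT_nbhd_inr,
    Set.ncard_image_of_injective _ Sum.inl_injective,
    Set.ncard_insert_of_notMem (s := H.neighborSet x) (fun h => H.irrefl h) (Set.toFinite _)]

lemma edges_inr (x : W) :
    Nat.card (H.induce (H.neighborSet x)).edgeSet + Nat.card (H.neighborSet x)
      ≤ Nat.card ((LTstep H).induce ((LTstep H).neighborSet (Sum.inr x))).edgeSet := by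
  classical
  set s := H.neighborSet x with hs
  set L := LTstep H with hL
  set T := L.neighborSet (Sum.inr x) with hT
  have mem1 : ∀ {a : W}, a ∈ s → (Sum.inl a : W ⊕ W) ∈ T := fun {a} ha => Or.inr (H.adj_symm ha)
  have memx : (Sum.inl x : W ⊕ W) ∈ T := Or.inl rfl
  let f : (H.induce s).Dart ⊕ (↥s ⊕ ↥s) → (L.induce T).Dart := fun p =>
    match p with
    | Sum.inl D => ⟨(⟨Sum.inl D.fst.1, mem1 D.fst.2⟩, ⟨Sum.inl D.snd.1, mem1 D.snd.2⟩), D.adj⟩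
    | Sum.inr (Sum.inl ⟨y, hy⟩) => ⟨(⟨Sum.inl x, memx⟩, ⟨Sum.inl y, mem1 hy⟩), hy⟩
    | Sum.inr (Sum.inr ⟨y, hy⟩) => ⟨(⟨Sum.inl y, mem1 hy⟩, ⟨Sum.inl x, memx⟩), H.adj_symm hy⟩
  have hinj : Function.Injective f := by
    rintro (⟨⟨⟨a,ha⟩,⟨b,hb⟩⟩,hab⟩ | ⟨y1,hy1⟩ | ⟨y1,hy1⟩)
           (⟨⟨⟨a2,ha2⟩,⟨b2,hb2⟩⟩,hab2⟩ | ⟨y2,hy2⟩ | ⟨y2,hy2⟩) h <;>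
      have h2 := congrArg (fun D => ((D.fst.1 : W ⊕ W), (D.snd.1 : W ⊕ W))) h <;>
      simp only [f, Prod.mk.injEq, Sum.inl.injEq, true_and, and_true] at h2
    · obtain ⟨rfl, rfl⟩ := h2; rfl
    · obtain ⟨rfl, rfl⟩ := h2; exact absurd ha (fun hc => H.irrefl hc)
    · obtain ⟨rfl, rfl⟩ := h2; exact absurd hb (fun hc => H.irrefl hc)
    · obtain ⟨rfl, rfl⟩ := h2; exact absurd ha2 (fun hc => H.irrefl hc)
    · obtain rfl := h2; rfl
    · obtain ⟨rfl, rfl⟩ := h2; exact absurd hy1 (fun hc => H.irrefl hc)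
    · obtain ⟨rfl, rfl⟩ := h2; exact absurd hb2 (fun hc => H.irrefl hc)
    · obtain ⟨rfl, rfl⟩ := h2; exact absurd hy1 (fun hc => H.irrefl hc)
    · obtain rfl := h2; rfl
  have hcard := Nat.card_le_card_of_injective f hinj
  simp only [Nat.card_sum, nat_card_dart_eq] at hcard
  omega

lemma edges_inl (x : W) :
    3 * Nat.card (H.induce (H.neighborSet x)).edgeSet + 2 * Nat.card (H.neighborSet x)
      ≤ Nat.card ((LTstep H).induce ((LTstep H).neighborSet (Sum.inl x))).edgeSet := by
  classical
  set s := H.neighborSet x with hs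
  set L := LTstep H with hL
  set T := L.neighborSet (Sum.inl x) with hT
  have memA : ∀ {a : W}, a ∈ s → (Sum.inl a : W ⊕ W) ∈ T := fun {a} ha => ha
  have memB : ∀ {b : W}, b ∈ s → (Sum.inr b : W ⊕ W) ∈ T := fun {b} hb => Or.inr hb
  have memX : (Sum.inr x : W ⊕ W) ∈ T := Or.inl rfl
  have vne : ∀ (u v : ↥s), (H.induce s).Adj u v → (u : W) ≠ (v : W) :=
    fun u v h e => h.ne (Subtype.ext e)
  have hne_x : ∀ {a : W}, a ∈ s → a ≠ x := fun {a} ha e => H.irrefl (by rw [e] at ha; exact ha)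
  let f : ((H.induce s).Dart ⊕ (H.induce s).Dart ⊕ (H.induce s).Dart) ⊕ (↥s ⊕ ↥s ⊕ ↥s ⊕ ↥s) →
      (L.induce T).Dart := fun p =>
    match p with
    | Sum.inl (Sum.inl D) =>
        ⟨(⟨Sum.inl D.fst.1, memA D.fst.2⟩, ⟨Sum.inl D.snd.1, memA D.snd.2⟩), D.adj⟩
    | Sum.inl (Sum.inr (Sum.inl D)) =>
        ⟨(⟨Sum.inl D.fst.1, memA D.fst.2⟩, ⟨Sum.inr D.snd.1, memB D.snd.2⟩), Or.inr D.adj⟩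
    | Sum.inl (Sum.inr (Sum.inr D)) =>
        ⟨(⟨Sum.inr D.fst.1, memB D.fst.2⟩, ⟨Sum.inl D.snd.1, memA D.snd.2⟩), Or.inr (H.adj_symm D.adj)⟩
    | Sum.inr (Sum.inl ⟨y, hy⟩) =>
        ⟨(⟨Sum.inl y, memA hy⟩, ⟨Sum.inr y, memB hy⟩), Or.inl rfl⟩
    | Sum.inr (Sum.inr (Sum.inl ⟨y, hy⟩)) =>
        ⟨(⟨Sum.inr y, memB hy⟩, ⟨Sum.inl y, memA hy⟩), Or.inl rfl⟩
    | Sum.inr (Sum.inr (Sum.inr (Sum.inl ⟨y, hy⟩))) =>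
        ⟨(⟨Sum.inl y, memA hy⟩, ⟨Sum.inr x, memX⟩), Or.inr (H.adj_symm hy)⟩
    | Sum.inr (Sum.inr (Sum.inr (Sum.inr ⟨y, hy⟩))) =>
        ⟨(⟨Sum.inr x, memX⟩, ⟨Sum.inl y, memA hy⟩), Or.inr (H.adj_symm hy)⟩
  have hinj : Function.Injective f := by
    rintro ((⟨⟨⟨a,ha⟩,⟨b,hb⟩⟩,hab⟩ | ⟨⟨⟨a,ha⟩,⟨b,hb⟩⟩,hab⟩ | ⟨⟨⟨a,ha⟩,⟨b,hb⟩⟩,hab⟩) |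
            (⟨y1,hy1⟩ | ⟨y1,hy1⟩ | ⟨y1,hy1⟩ | ⟨y1,hy1⟩))
           ((⟨⟨⟨a2,ha2⟩,⟨b2,hb2⟩⟩,hab2⟩ | ⟨⟨⟨a2,ha2⟩,⟨b2,hb2⟩⟩,hab2⟩ | ⟨⟨⟨a2,ha2⟩,⟨b2,hb2⟩⟩,hab2⟩) |
            (⟨y2,hy2⟩ | ⟨y2,hy2⟩ | ⟨y2,hy2⟩ | ⟨y2,hy2⟩)) h <;>
      have h2 := congrArg (fun D => ((D.fst.1 : W ⊕ W), (D.snd.1 : W ⊕ W))) h <;>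
      simp only [f, Prod.mk.injEq, Sum.inl.injEq, Sum.inr.injEq, reduceCtorEq, true_and,
        and_true, and_self, false_and, and_false] at h2
    · obtain ⟨rfl, rfl⟩ := h2; rfl
    · obtain ⟨rfl, rfl⟩ := h2; rfl
    · exact absurd (h2.1.trans h2.2.symm) (vne _ _ hab)
    · exact absurd h2.2 (hne_x hb)
    · obtain ⟨rfl, rfl⟩ := h2; rfl
    · exact absurd (h2.1.trans h2.2.symm) (vne _ _ hab)
    · exact absurd h2.1 (hne_x ha)
    · exact absurd (h2.1.symm.trans h2.2) (vne _ _ hab2)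
    · obtain rfl := h2; rfl
    · exact absurd h2.2 (hne_x hy1)
    · exact absurd (h2.1.symm.trans h2.2) (vne _ _ hab2)
    · obtain rfl := h2; rfl
    · exact absurd h2.1 (hne_x hy1)
    · exact absurd h2.2.symm (hne_x hb2)
    · exact absurd h2.2.symm (hne_x hy2)
    · obtain rfl := h2; rfl
    · exact absurd h2.1.symm (hne_x ha2)
    · exact absurd h2.1.symm (hne_x hy2)
    · obtain rfl := h2; rfl
  have hcard := Nat.card_le_card_of_injective f hinj
  simp only [Nat.card_sum, nat_card_dart_eq] at hcard
  omega

lemma lcc_nonneg (K : SimpleGraph W) (x : W) : 0 ≤ localClusteringCoeff K x :=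
  div_nonneg (by positivity) (by positivity)

lemma cc_nonneg (K : SimpleGraph W) : 0 ≤ clusteringCoeff K :=
  div_nonneg (Finset.sum_nonneg fun x _ => lcc_nonneg K x) (by positivity)

set_option maxHeartbeats 1000000 in
lemma key_ineq (d e : ℕ) (hd : 1 ≤ d) (he : e ≤ d.choose 2) :
    (7/4 : ℝ) * (1 - 3/(7*(d:ℝ))) * ((e:ℝ) / ((d.choose 2 : ℕ) : ℝ)) ≤
      (3*(e:ℝ)+2*(d:ℝ)) / (((2*d+1).choose 2 : ℕ) : ℝ)
        + ((e:ℝ)+(d:ℝ)) / (((d+1).choose 2 : ℕ) : ℝ) := by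
  rcases eq_or_lt_of_le hd with h1 | h2
  · obtain rfl : d = 1 := h1.symm
    have hch : (1:ℕ).choose 2 = 0 := rfl
    have he0 : e = 0 := by omega
    have hL : (7/4 : ℝ) * (1 - 3/(7*((1:ℕ):ℝ))) * ((e:ℝ) / (((1:ℕ).choose 2 : ℕ) : ℝ)) = 0 := by
      rw [he0]; simp
    rw [hL]
    positivity
  · have hd2 : (2:ℝ) ≤ (d:ℝ) := by exact_mod_cast h2
    have hdc : ((d.choose 2 : ℕ) : ℝ) = (d:ℝ) * ((d:ℝ) - 1) / 2 := by
      rw [Nat.cast_choose_two]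
    have hdc1 : (((d+1).choose 2 : ℕ) : ℝ) = ((d:ℝ)+1) * (d:ℝ) / 2 := by
      rw [Nat.cast_choose_two]; push_cast; ring
    have hdc2 : (((2*d+1).choose 2 : ℕ) : ℝ) = (2*(d:ℝ)+1) * (2*(d:ℝ)) / 2 := by
      rw [Nat.cast_choose_two]; push_cast; ring
    rw [hdc, hdc1, hdc2]
    have he' : 2 * (e:ℝ) ≤ (d:ℝ) * ((d:ℝ) - 1) := by
      have : (e:ℝ) ≤ ((d.choose 2 : ℕ) : ℝ) := by exact_mod_cast he
      rw [hdc] at this; linarith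
    have hdpos : (0:ℝ) < (d:ℝ) := by linarith
    have hD1 : (0:ℝ) < (d:ℝ) * ((d:ℝ) - 1) / 2 := by nlinarith
    have hD2 : (0:ℝ) < (2*(d:ℝ)+1) * (2*(d:ℝ)) / 2 := by nlinarith
    have hD3 : (0:ℝ) < ((d:ℝ)+1) * (d:ℝ) / 2 := by nlinarith
    have he0 : (0:ℝ) ≤ (e:ℝ) := by positivity
    have hH : 0 ≤ (d:ℝ) * ((d:ℝ) - 1) * (24*(d:ℝ)^2 + 16*(d:ℝ))
        - 2 * (e:ℝ) * (19*(d:ℝ)^2 + 8*(d:ℝ) - 3) := by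
      have hfac : (0:ℝ) ≤ 19*(d:ℝ)^2 + 8*(d:ℝ) - 3 := by nlinarith
      have := mul_le_mul he' (by nlinarith : 19*(d:ℝ)^2 + 8*(d:ℝ) - 3 ≤ 24*(d:ℝ)^2 + 16*(d:ℝ))
        hfac (by nlinarith : (0:ℝ) ≤ (d:ℝ) * ((d:ℝ) - 1))
      nlinarith
    rw [div_add_div _ _ hD2.ne' hD3.ne']
    have hne1 : (d:ℝ) ≠ 0 := ne_of_gt hdpos
    have hne2 : (d:ℝ) - 1 ≠ 0 := by nlinarith
    have hLl : (7/4 : ℝ) * (1 - 3/(7*(d:ℝ))) * ((e:ℝ) / ((d:ℝ) * ((d:ℝ)-1) / 2))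
        = ((7*(d:ℝ)-3)*(e:ℝ)) / (2*(d:ℝ)^2*((d:ℝ)-1)) := by
      field_simp
      ring
    have hDL : (0:ℝ) < 2*(d:ℝ)^2*((d:ℝ)-1) := by nlinarith
    rw [hLl, div_le_div_iff₀ hDL (mul_pos hD2 hD3)]
    nlinarith [mul_nonneg (mul_nonneg (le_of_lt hdpos) (le_of_lt hdpos)) hH]

lemma step_bound [Nonempty W] (m : ℕ)
    (hdeg : ∀ y : W, m + 1 ≤ Nat.card (H.neighborSet y)) :
    (7/8 : ℝ) * (1 - 3/(7*((m:ℝ)+1))) * clusteringCoeff H ≤ clusteringCoeff (LTstep H) := by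
  classical
  have hand : ∀ x : W, (7/4 : ℝ) * (1 - 3/(7*((m:ℝ)+1))) * localClusteringCoeff H x ≤
      localClusteringCoeff (LTstep H) (Sum.inl x) + localClusteringCoeff (LTstep H) (Sum.inr x) := by
    intro x
    set d := Nat.card (H.neighborSet x) with hd
    set e := Nat.card (H.induce (H.neighborSet x)).edgeSet with he
    have hd1 : 1 ≤ d := le_trans (by omega) (hdeg x)
    have hedges : e ≤ d.choose 2 := by
      have h1 := SimpleGraph.card_edgeFinset_le_card_choose_two
        (G := H.induce (H.neighborSet x))
      rw [edgeFinset, Set.toFinset_card] at h1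
      rw [he, hd, Nat.card_eq_fintype_card, Nat.card_eq_fintype_card]
      exact h1
    have hstep1 : (7/4 : ℝ) * (1 - 3/(7*((m:ℝ)+1))) * localClusteringCoeff H x ≤
        (7/4 : ℝ) * (1 - 3/(7*(d:ℝ))) * localClusteringCoeff H x := by
      apply mul_le_mul_of_nonneg_right _ (lcc_nonneg H x)
      have hmd : ((m:ℝ)+1) ≤ (d:ℝ) := by exact_mod_cast hdeg x
      have h0 : (0:ℝ) < (m:ℝ)+1 := by positivity
      gcongr <;> linarith
    refine le_trans hstep1 ?_
    have hlcc : localClusteringCoeff H x = (e:ℝ) / ((d.choose 2 : ℕ) : ℝ) := rfl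
    rw [hlcc]
    refine le_trans (key_ineq d e hd1 hedges) ?_
    have hA : localClusteringCoeff (LTstep H) (Sum.inl x)
        = (Nat.card ((LTstep H).induce ((LTstep H).neighborSet (Sum.inl x))).edgeSet : ℝ) /
          (((2*d+1).choose 2 : ℕ) : ℝ) := by
      rw [localClusteringCoeff, card_nbhd_inl]
    have hB : localClusteringCoeff (LTstep H) (Sum.inr x)
        = (Nat.card ((LTstep H).induce ((LTstep H).neighborSet (Sum.inr x))).edgeSet : ℝ) /
          (((d+1).choose 2 : ℕ) : ℝ) := by
      rw [localClusteringCoeff, card_nbhd_inr]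
    rw [hA, hB]
    have h1 : (3*(e:ℝ)+2*(d:ℝ)) ≤
        (Nat.card ((LTstep H).induce ((LTstep H).neighborSet (Sum.inl x))).edgeSet : ℝ) := by
      have := edges_inl H x
      push_cast
      exact_mod_cast this
    have h2 : ((e:ℝ)+(d:ℝ)) ≤
        (Nat.card ((LTstep H).induce ((LTstep H).neighborSet (Sum.inr x))).edgeSet : ℝ) := by
      have := edges_inr H x
      exact_mod_cast this
    gcongr <;> positivity
  have hN : (0:ℝ) < (Fintype.card W : ℝ) := by
    have := Fintype.card_pos (α := W)
    exact_mod_cast this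
  have hsum : (7/4 : ℝ) * (1 - 3/(7*((m:ℝ)+1))) * ∑ x : W, localClusteringCoeff H x ≤
      ∑ z : W ⊕ W, localClusteringCoeff (LTstep H) z := by
    rw [Fintype.sum_sum_type, Finset.mul_sum, ← Finset.sum_add_distrib]
    exact Finset.sum_le_sum fun x _ => hand x
  rw [clusteringCoeff, clusteringCoeff]
  have hcard2 : (Fintype.card (W ⊕ W) : ℝ) = 2 * (Fintype.card W : ℝ) := by
    rw [Fintype.card_sum]; push_cast; ring
  rw [hcard2, le_div_iff₀ (by positivity)]
  have hNne : (Fintype.card W : ℝ) ≠ 0 := ne_of_gt hN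
  have hexp : (7/8 : ℝ) * (1 - 3/(7*((m:ℝ)+1))) *
      ((∑ x : W, localClusteringCoeff H x) / (Fintype.card W : ℝ)) * (2 * (Fintype.card W : ℝ))
      = (7/4 : ℝ) * (1 - 3/(7*((m:ℝ)+1))) * (∑ x : W, localClusteringCoeff H x) *
        ((Fintype.card W : ℝ)⁻¹ * (Fintype.card W : ℝ)) := by
    rw [div_eq_mul_inv]; ring
  rw [hexp, inv_mul_cancel₀ hNne, mul_one]
  exact hsum

end ILTAux

section ILTMain

lemma ILM_true_succ {V : Type} (G : SimpleGraph V) (t : ℕ) :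
    ILM (fun _ => true) G (t+1) = LTstep (ILM (fun _ => true) G t) := rfl

lemma ILM_deg {V : Type} [Fintype V] (G : SimpleGraph V)
    (h0 : ∀ y, 1 ≤ Nat.card (G.neighborSet y)) :
    ∀ t, ∀ y : ILMVertex V t, t + 1 ≤ Nat.card ((ILM (fun _ => true) G t).neighborSet y)
  | 0, y => h0 y
  | (t+1), y => by
    letI := ILMVertex.fintype (V := V) t
    obtain (x | x) := y
    · show t + 1 + 1 ≤ Nat.card ((LTstep (ILM (fun _ => true) G t)).neighborSet (Sum.inl x))
      rw [card_nbhd_inl]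
      have := ILM_deg G h0 t x
      omega
    · show t + 1 + 1 ≤ Nat.card ((LTstep (ILM (fun _ => true) G t)).neighborSet (Sum.inr x))
      rw [card_nbhd_inr]
      have := ILM_deg G h0 t x
      omega

lemma ILM_bound {V : Type} [Fintype V] [Nonempty V] (G : SimpleGraph V)
    (h0 : ∀ y, 1 ≤ Nat.card (G.neighborSet y)) :
    ∀ t, (∏ s ∈ Finset.range t, ((7:ℝ)/8 * (1 - 3/(7*((s:ℝ)+1))))) * clusteringCoeff G ≤
      clusteringCoeff (ILM (fun _ => true) G t) := by
  intro t
  induction t with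
  | zero =>
    rw [Finset.range_zero, Finset.prod_empty, one_mul]
    exact le_refl (clusteringCoeff G)
  | succ t ih =>
    letI := ILMVertex.fintype (V := V) t
    letI := ILMVertex.nonempty (V := V) t
    have hstep := step_bound (ILM (fun _ => true) G t) t (ILM_deg G h0 t)
    have ha : (0:ℝ) ≤ (7:ℝ)/8 * (1 - 3/(7*((t:ℝ)+1))) := by
      have h1 : 3/(7*((t:ℝ)+1)) ≤ 1 := by
        rw [div_le_one (by positivity)]
        have : (0:ℝ) ≤ (t:ℝ) := by positivity
        linarith
      linarith
    rw [Finset.prod_range_succ]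
    calc (∏ s ∈ Finset.range t, ((7:ℝ)/8 * (1 - 3/(7*((s:ℝ)+1)))))
          * ((7:ℝ)/8 * (1 - 3/(7*((t:ℝ)+1)))) * clusteringCoeff G
        = ((7:ℝ)/8 * (1 - 3/(7*((t:ℝ)+1)))) *
          ((∏ s ∈ Finset.range t, ((7:ℝ)/8 * (1 - 3/(7*((s:ℝ)+1))))) * clusteringCoeff G) := by
          ring
      _ ≤ ((7:ℝ)/8 * (1 - 3/(7*((t:ℝ)+1)))) * clusteringCoeff (ILM (fun _ => true) G t) :=
          mul_le_mul_of_nonneg_left ih ha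
      _ = (7/8 : ℝ) * (1 - 3/(7*((t:ℝ)+1))) * clusteringCoeff (ILM (fun _ => true) G t) := by
          ring
      _ ≤ clusteringCoeff (LTstep (ILM (fun _ => true) G t)) := hstep
      _ = clusteringCoeff (ILM (fun _ => true) G (t+1)) := rfl

lemma prod_bound : ∀ t : ℕ, 1 ≤ t →
    (4/7 : ℝ) * (t:ℝ) ^ (-(3/7) : ℝ) ≤ ∏ s ∈ Finset.range t, (1 - 3/(7*((s:ℝ)+1))) := by
  intro t ht
  induction t, ht using Nat.le_induction with
  | base =>
    norm_num [Finset.prod_range_one, Real.one_rpow]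
  | succ t ht ih =>
    have ih' := ih
    rw [Finset.prod_range_succ]
    have htpos : (0:ℝ) < (t:ℝ) := by exact_mod_cast ht
    have ht1pos : (0:ℝ) < (t:ℝ) + 1 := by linarith
    have hfac : (0:ℝ) ≤ 1 - 3/(7*((t:ℝ)+1)) := by
      have h1 : 3/(7*((t:ℝ)+1)) ≤ 1 := by
        rw [div_le_one (by positivity)]; linarith
      linarith
    have hmain : (4/7 : ℝ) * ((t:ℝ)+1) ^ (-(3/7) : ℝ) ≤
        ((4/7 : ℝ) * (t:ℝ) ^ (-(3/7) : ℝ)) * (1 - 3/(7*((t:ℝ)+1))) := by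
      have hbern : ((t:ℝ)/((t:ℝ)+1)) ^ ((3/7 : ℝ)) ≤ 1 - (3/7 : ℝ) * (1/((t:ℝ)+1)) := by
        have h := rpow_one_add_le_one_add_mul_self
          (s := -(1/((t:ℝ)+1))) (by
            have : 1/((t:ℝ)+1) ≤ 1 := by
              rw [div_le_one ht1pos]; linarith
            linarith)
          (p := (3/7 : ℝ)) (by norm_num) (by norm_num)
        have heq : (1 + -(1/((t:ℝ)+1))) = (t:ℝ)/((t:ℝ)+1) := by
          rw [eq_div_iff ht1pos.ne', add_mul, neg_mul, one_div, inv_mul_cancel₀ ht1pos.ne']; ring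
        rw [heq] at h
        calc ((t:ℝ)/((t:ℝ)+1)) ^ ((3/7 : ℝ)) ≤ 1 + (3/7:ℝ) * -(1/((t:ℝ)+1)) := h
          _ = 1 - (3/7 : ℝ) * (1/((t:ℝ)+1)) := by ring
      have hid : ((t:ℝ)+1) ^ (-(3/7) : ℝ)
          = (t:ℝ) ^ (-(3/7) : ℝ) * ((t:ℝ)/((t:ℝ)+1)) ^ ((3/7 : ℝ)) := by
        rw [Real.div_rpow htpos.le ht1pos.le, Real.rpow_neg htpos.le, Real.rpow_neg ht1pos.le]
        field_simp
      rw [hid]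
      have hpow : (0:ℝ) ≤ (t:ℝ) ^ (-(3/7) : ℝ) := Real.rpow_nonneg htpos.le _
      have h37 : 1 - (3/7 : ℝ) * (1/((t:ℝ)+1)) = 1 - 3/(7*((t:ℝ)+1)) := by
        field_simp
      calc (4/7 : ℝ) * ((t:ℝ) ^ (-(3/7) : ℝ) * ((t:ℝ)/((t:ℝ)+1)) ^ ((3/7 : ℝ)))
          ≤ (4/7 : ℝ) * ((t:ℝ) ^ (-(3/7) : ℝ) * (1 - 3/(7*((t:ℝ)+1)))) := by
            rw [← h37]
            have := mul_le_mul_of_nonneg_left hbern hpow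
            nlinarith
        _ = ((4/7 : ℝ) * (t:ℝ) ^ (-(3/7) : ℝ)) * (1 - 3/(7*((t:ℝ)+1))) := by ring
    have hcast : ((t+1 : ℕ) : ℝ) = (t:ℝ) + 1 := by push_cast; ring
    rw [hcast]
    refine le_trans hmain ?_
    exact mul_le_mul_of_nonneg_right ih' hfac

end ILTMain

/-- If `G` has minimum degree at least `1` and positive clustering
coefficient, then there is `c > 0` with `C(ILT^t(G)) ≥ c · (7/8)^t · t^{-3/7}`
for all `t ≥ 1` (ILT is ILM with the all-ones sequence). -/
theorem clusteringCoeff_ILT {V : Type} [Fintype V] [Nonempty V] (G : SimpleGraph V)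
    [DecidableRel G.Adj] (hδ : 1 ≤ G.minDegree) (hC : 0 < clusteringCoeff G) :
    ∃ c : ℝ, 0 < c ∧ ∀ t : ℕ, 1 ≤ t →
      c * (7 / 8 : ℝ) ^ t * (t : ℝ) ^ (-(3 / 7) : ℝ) ≤
        clusteringCoeff (ILM (fun _ => true) G t) := by
  have h0 : ∀ y, 1 ≤ Nat.card (G.neighborSet y) := fun y => by
    rw [Nat.card_eq_fintype_card, card_neighborSet_eq_degree]
    exact le_trans hδ (G.minDegree_le_degree y)
  refine ⟨(4/7 : ℝ) * clusteringCoeff G, by positivity, fun t ht => ?_⟩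
  have hprod := prod_bound t ht
  have hbig := ILM_bound G h0 t
  calc (4/7 : ℝ) * clusteringCoeff G * (7/8 : ℝ) ^ t * (t:ℝ) ^ (-(3/7) : ℝ)
      = (7/8 : ℝ) ^ t * ((4/7 : ℝ) * (t:ℝ) ^ (-(3/7) : ℝ)) * clusteringCoeff G := by ring
    _ ≤ (7/8 : ℝ) ^ t * (∏ s ∈ Finset.range t, (1 - 3/(7*((s:ℝ)+1)))) * clusteringCoeff G := by
        apply mul_le_mul_of_nonneg_right _ hC.le
        exact mul_le_mul_of_nonneg_left hprod (by positivity)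
    _ = (∏ s ∈ Finset.range t, ((7:ℝ)/8 * (1 - 3/(7*((s:ℝ)+1))))) * clusteringCoeff G := by
        rw [Finset.prod_mul_distrib, Finset.prod_const, Finset.card_range]
    _ ≤ clusteringCoeff (ILM (fun _ => true) G t) := hbig
end

section
/- Let G be a finite simple graph with at least two vertices, and let S = (s_0, s_1, s_2, …) be a binary sequence whose two smallest indices τ₁ < τ₂ with s_{τ₁} = s_{τ₂} = 0 satisfy τ₂ ≥ τ₁ + 2 (the first two 0's are non-consecutive). Then for all t ≥ τ₂ + 1, the graph ILM^t(S,G) is Hamiltonian, i.e., contains a cycle visiting every vertex exactly once. -/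
open SimpleGraph

instance ILMVertex.decEq {V : Type} [DecidableEq V] : ∀ t, DecidableEq (ILMVertex V t)
  | 0 => inferInstanceAs (DecidableEq V)
  | t + 1 =>
    letI := ILMVertex.decEq (V := V) t
    inferInstanceAs (DecidableEq (ILMVertex V t ⊕ ILMVertex V t))


namespace ILMAux

variable {α : Type*} {β : Type*} {R : α → α → Prop} {R' : β → β → Prop}

/-- consecutive windows of the cyclic list `a :: l` closing with `z`. -/
def wins (a : α) : List α → α → List (α × α)
  | [], z => [(a, z)]
  | b :: l, z => (a, b) :: wins b l z

lemma wins_ne_nil (a : α) (l : List α) (z : α) : wins a l z ≠ [] := by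
  cases l <;> simp [wins]

lemma wins_map_fst (a : α) (l : List α) (z : α) : (wins a l z).map Prod.fst = a :: l := by
  induction l generalizing a with
  | nil => simp [wins]
  | cons b l ih => simp [wins, ih]

lemma wins_map_snd (a : α) (l : List α) (z : α) : (wins a l z).map Prod.snd = l ++ [z] := by
  induction l generalizing a with
  | nil => simp [wins]
  | cons b l ih => simp [wins, ih]

lemma wins_length (a : α) (l : List α) (z : α) : (wins a l z).length = l.length + 1 := by
  have := congrArg List.length (wins_map_fst a l z)
  simpa using this

lemma chain_head {x z : α} {l : List α} (h : List.Chain R x (l ++ [z])) : R x (l.headD z) := by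
  cases l with
  | nil => simpa using (List.chain_cons.1 h).1
  | cons b l => exact (List.chain_cons.1 h).1

lemma chain_last {x z : α} {l : List α} (h : List.Chain R x (l ++ [z])) :
    R (l.getLastD x) z := by
  induction l generalizing x with
  | nil => simpa using (List.chain_cons.1 h).1
  | cons b l ih =>
    have h' := (List.chain_cons.1 h).2
    rw [List.getLastD_cons]
    exact ih h'

lemma flatMap_wins_ne_nil {F : α → α → List β} (hne : ∀ a b, F a b ≠ [])
    (a : α) (l : List α) (z : α) :
    ((wins a l z).flatMap fun p => F p.1 p.2) ≠ [] := by
  cases l <;> simp [wins, hne]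

lemma chain_flatMap_aux {F : α → α → List β}
    (hne : ∀ a b, F a b ≠ [])
    (h1 : ∀ a b, R a b → (F a b).Chain' R')
    (h2 : ∀ a b c, R a b → R b c → ∀ x ∈ (F a b).getLast?, ∀ y ∈ (F b c).head?, R' x y) :
    ∀ (l : List α) (a z : α), List.Chain R a (l ++ [z]) →
      ((wins a l z).flatMap fun p => F p.1 p.2).Chain' R' ∧
      ((wins a l z).flatMap fun p => F p.1 p.2).head? = (F a (l.headD z)).head? ∧
      ((wins a l z).flatMap fun p => F p.1 p.2).getLast? = (F (l.getLastD a) z).getLast? := by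
  intro l
  induction l with
  | nil =>
    intro a z h
    have hr : R a z := by simpa using (List.chain_cons.1 h).1
    refine ⟨?_, ?_, ?_⟩ <;> simp [wins, h1 _ _ hr]
  | cons b l ih =>
    intro a z h
    have hab : R a b := (List.chain_cons.1 h).1
    have h' : List.Chain R b (l ++ [z]) := (List.chain_cons.1 h).2
    obtain ⟨ihc, ihh, ihl⟩ := ih b z h'
    have hbhead : R b (l.headD z) := chain_head h'
    have hfm : (wins a (b :: l) z).flatMap (fun p => F p.1 p.2)
        = F a b ++ (wins b l z).flatMap fun p => F p.1 p.2 := by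
      simp [wins]
    refine ⟨?_, ?_, ?_⟩
    · rw [hfm]
      refine List.isChain_append.2 ⟨h1 _ _ hab, ihc, ?_⟩
      intro x hx y hy
      rw [ihh] at hy
      exact h2 a b _ hab hbhead x hx y hy
    · rw [hfm, List.head?_append_of_ne_nil _ (hne a b)]
      simp
    · rw [hfm, List.getLast?_append_of_ne_nil _ (flatMap_wins_ne_nil hne b l z), ihl,
        List.getLastD_cons]

end ILMAux

namespace ILMAux
variable {α : Type*} {β : Type*} {R : α → α → Prop} {R' : β → β → Prop}

def cycBind (F : α → α → List β) (a : α) (l : List α) : List β :=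
  (wins a l a).flatMap fun p => F p.1 p.2

lemma chain_cycBind {F : α → α → List β}
    (hne : ∀ a b, F a b ≠ [])
    (h1 : ∀ a b, R a b → (F a b).Chain' R')
    (h2 : ∀ a b c, R a b → R b c → ∀ x ∈ (F a b).getLast?, ∀ y ∈ (F b c).head?, R' x y)
    (a : α) (l : List α) (h : List.Chain R a (l ++ [a])) :
    ∃ m mt, cycBind F a l = m :: mt ∧ List.Chain R' m (mt ++ [m]) := by
  obtain ⟨hc, hh, hl⟩ := chain_flatMap_aux hne h1 h2 l a a h
  have hMne : ((wins a l a).flatMap fun p => F p.1 p.2) ≠ [] := flatMap_wins_ne_nil hne a l a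
  rcases hM : ((wins a l a).flatMap fun p => F p.1 p.2) with _ | ⟨m, mt⟩
  · exact absurd hM hMne
  refine ⟨m, mt, hM, ?_⟩
  have hch : List.Chain' R' (((wins a l a).flatMap fun p => F p.1 p.2) ++ [m]) := by
    refine List.isChain_append.2 ⟨hc, by simp, ?_⟩
    intro x hx y hy
    simp only [List.head?_cons, Option.mem_def, Option.some.injEq] at hy
    subst hy
    refine h2 (l.getLastD a) a (l.headD a) (chain_last h) (chain_head h) x ?_ m ?_
    · rw [← hl]; exact hx
    · rw [← hh, hM]; simp
  rw [hM] at hch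
  have h2' : List.Chain' R' (m :: (mt ++ [m])) := by simpa using hch
  exact h2'

lemma length_cycBind {F : α → α → List β} {k : ℕ} (hk : ∀ a b, (F a b).length = k)
    (a : α) (l : List α) : (cycBind F a l).length = k * (l.length + 1) := by
  unfold cycBind
  rw [List.length_flatMap]
  have : ((wins a l a).map (List.length ∘ fun p => F p.1 p.2)) = List.replicate (l.length + 1) k := by
    rw [List.eq_replicate_iff]
    constructor
    · rw [List.length_map, wins_length]
    · intro x hx
      obtain ⟨p, _, rfl⟩ := List.mem_map.1 hx
      exact hk _ _

  simp only [Function.comp_def] at this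
  rw [this, List.sum_replicate, smul_eq_mul, Nat.mul_comm]

lemma mem_cycBind {F : α → α → List β} {x : β} {a : α} {l : List α} (p : α × α)
    (hp : p ∈ wins a l a) (hx : x ∈ F p.1 p.2) : x ∈ cycBind F a l :=
  List.mem_flatMap.2 ⟨p, hp, hx⟩

lemma exists_win_fst {a q : α} {l : List α} (hq : q ∈ a :: l) :
    ∃ w ∈ wins a l a, w.1 = q := by
  have : q ∈ (wins a l a).map Prod.fst := by rw [wins_map_fst]; exact hq
  exact List.mem_map.1 this

lemma exists_win_snd {a q : α} {l : List α} (hq : q ∈ a :: l) :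
    ∃ w ∈ wins a l a, w.2 = q := by
  have : q ∈ (wins a l a).map Prod.snd := by
    rw [wins_map_snd]
    rcases List.mem_cons.1 hq with h | h
    · simp [h]
    · exact List.mem_append.2 (Or.inl h)
  exact List.mem_map.1 this

end ILMAux

namespace ILMAux

lemma nodup_of_cover {α : Type*} [Fintype α] [DecidableEq α] {l : List α}
    (cov : ∀ x, x ∈ l) (hlen : l.length = Fintype.card α) : l.Nodup := by
  have h1 : l.toFinset = Finset.univ := Finset.eq_univ_iff_forall.2 (by simpa using cov)
  have h2 : l.dedup.length = Fintype.card α := by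
    rw [← List.card_toFinset, h1, Finset.card_univ]
  have h3 : l.dedup = l := (List.dedup_sublist l).eq_of_length (by rw [h2, hlen])
  rw [← h3]
  exact List.nodup_dedup l

variable {V : Type*}

def mkWalk (G : SimpleGraph V) (b : V) : (a : V) → (l : List V) →
    List.Chain G.Adj a (l ++ [b]) → G.Walk a b
  | _, [], h => Walk.cons (List.rel_of_chain_cons h) Walk.nil
  | _, c :: l, h => Walk.cons (List.rel_of_chain_cons h)
      (mkWalk G b c l (List.chain_of_chain_cons h))

lemma mkWalk_support (G : SimpleGraph V) (b a : V) (l : List V)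
    (h : List.Chain G.Adj a (l ++ [b])) : (mkWalk G b a l h).support = a :: (l ++ [b]) := by
  induction l generalizing a with
  | nil => simp [mkWalk]
  | cons c l ih => simp [mkWalk, ih]; exact ih _ _

lemma edge_not_mem_edges {G : SimpleGraph V} {b a : V} (p : G.Walk b a)
    (hnd : p.support.Nodup) (hlen : 3 ≤ p.support.length) : s(a, b) ∉ p.edges := by
  cases p with
  | nil => simp
  | @cons _ x _ h q =>
    intro hmem
    rw [Walk.support_cons, List.nodup_cons] at hnd
    obtain ⟨hb, hq⟩ := hnd
    rw [Walk.edges_cons, List.mem_cons] at hmem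
    rcases hmem with hmem | hmem
    · rw [Sym2.eq_iff] at hmem
      rcases hmem with ⟨hab, _⟩ | ⟨hax, _⟩
      · exact hb (hab ▸ q.end_mem_support)
      · subst hax
        have hpath : q.IsPath := (Walk.isPath_def q).2 hq
        have hnil : q = Walk.nil := Walk.isPath_iff_eq_nil.1 hpath
        subst hnil
        simp at hlen
    · exact hb (q.snd_mem_support_of_mem_edges hmem)

lemma isHamiltonian_of_list {V : Type*} [Fintype V] [DecidableEq V] (G : SimpleGraph V)
    (a : V) (l : List V) (hch : List.Chain G.Adj a (l ++ [a]))
    (cov : ∀ x, x ∈ a :: l) (hlen : (a :: l).length = Fintype.card V)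
    (h3 : 3 ≤ Fintype.card V) : G.IsHamiltonian := by
  have hnd : (a :: l).Nodup := nodup_of_cover cov hlen
  cases l with
  | nil => rw [← hlen] at h3; simp at h3
  | cons c l₂ =>
    have hac : G.Adj a c := List.rel_of_chain_cons hch
    have hch₂ : List.Chain G.Adj c (l₂ ++ [a]) := List.chain_of_chain_cons hch
    set W1 : G.Walk c a := mkWalk G a c l₂ hch₂ with hW1
    have hsup : W1.support = c :: (l₂ ++ [a]) := mkWalk_support G a c l₂ hch₂
    have hperm : W1.support.Perm (a :: c :: l₂) := by
      rw [hsup, show c :: (l₂ ++ [a]) = (c :: l₂) ++ [a] by simp]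
      exact List.perm_append_singleton a (c :: l₂)
    have hnd1 : W1.support.Nodup := hperm.nodup_iff.2 hnd
    have hpath : W1.IsPath := (Walk.isPath_def W1).2 hnd1
    have hlen1 : 3 ≤ W1.support.length := by
      rw [hperm.length_eq, hlen]
      exact h3
    have hedge : s(a, c) ∉ W1.edges := edge_not_mem_edges W1 hnd1 hlen1
    have hcyc : (Walk.cons hac W1).IsCycle := (Walk.cons_isCycle_iff W1 hac).2 ⟨hpath, hedge⟩
    intro _
    refine ⟨a, Walk.cons hac W1, ?_⟩
    rw [Walk.isHamiltonianCycle_iff_isCycle_and_support_count_tail_eq_one]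
    refine ⟨hcyc, ?_⟩
    intro x
    rw [Walk.support_cons, List.tail_cons]
    rw [hperm.count_eq]
    exact List.count_eq_one_of_mem hnd (cov x)

end ILMAux

namespace ILMAux

variable {V : Type}

@[simp] lemma LT_adj_ll {G : SimpleGraph V} {a b : V} :
    (LTstep G).Adj (Sum.inl a) (Sum.inl b) ↔ G.Adj a b := Iff.rfl
@[simp] lemma LT_adj_lr {G : SimpleGraph V} {a b : V} :
    (LTstep G).Adj (Sum.inl a) (Sum.inr b) ↔ (a = b ∨ G.Adj a b) := Iff.rfl
@[simp] lemma LT_adj_rl {G : SimpleGraph V} {a b : V} :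
    (LTstep G).Adj (Sum.inr a) (Sum.inl b) ↔ (b = a ∨ G.Adj b a) := Iff.rfl
@[simp] lemma LT_adj_rr {G : SimpleGraph V} {a b : V} :
    (LTstep G).Adj (Sum.inr a) (Sum.inr b) ↔ False := Iff.rfl

@[simp] lemma LAT_adj_ll {G : SimpleGraph V} {a b : V} :
    (LATstep G).Adj (Sum.inl a) (Sum.inl b) ↔ G.Adj a b := Iff.rfl
@[simp] lemma LAT_adj_lr {G : SimpleGraph V} {a b : V} :
    (LATstep G).Adj (Sum.inl a) (Sum.inr b) ↔ (a ≠ b ∧ ¬ G.Adj a b) := Iff.rfl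
@[simp] lemma LAT_adj_rl {G : SimpleGraph V} {a b : V} :
    (LATstep G).Adj (Sum.inr a) (Sum.inl b) ↔ (b ≠ a ∧ ¬ G.Adj b a) := Iff.rfl
@[simp] lemma LAT_adj_rr {G : SimpleGraph V} {a b : V} :
    (LATstep G).Adj (Sum.inr a) (Sum.inr b) ↔ False := Iff.rfl

/-- `x` is not in the closed neighbourhood of `y`. -/
def NAdj (G : SimpleGraph V) (x y : V) : Prop := x ≠ y ∧ ¬ G.Adj x y

/-- The relation carried along the Hamiltonian cycle: consecutive cycle vertices are
adjacent, and the vertex `p.2` assigned to the cycle edge `p.1 q.1` avoids the closed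
neighbourhoods of both endpoints. -/
def QRel (G : SimpleGraph V) (p q : V × V) : Prop :=
  G.Adj p.1 q.1 ∧ NAdj G p.1 p.2 ∧ NAdj G q.1 p.2

/-- Strong Hamiltonicity invariant. -/
def QProp [Fintype V] (G : SimpleGraph V) : Prop :=
  ∃ (p : V × V) (l : List (V × V)),
    List.Chain (QRel G) p (l ++ [p]) ∧
    (∀ x : V, ∃ q ∈ p :: l, q.1 = x) ∧
    (∀ x : V, ∃ q ∈ p :: l, q.2 = x) ∧
    (p :: l).length = Fintype.card V

lemma QProp_LT [Fintype V] {G : SimpleGraph V} (h : QProp G) : QProp (LTstep G) := by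
  classical
  obtain ⟨p, l, hch, hc1, hc2, hlen⟩ := h
  set F : (V × V) → (V × V) → List ((V ⊕ V) × (V ⊕ V)) := fun p _ =>
    [(Sum.inl p.1, Sum.inl p.2), (Sum.inr p.1, Sum.inr p.2)] with hF
  have hne : ∀ a b, F a b ≠ [] := fun a b => by simp [hF]
  have h1 : ∀ a b, QRel G a b → (F a b).Chain' (QRel (LTstep G)) := by
    rintro a b ⟨hadj, ⟨hne1, hna1⟩, ⟨hne2, hna2⟩⟩
    refine List.isChain_pair.2 ⟨Or.inl rfl, ⟨?_, ?_⟩, ⟨?_, ?_⟩⟩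
    · simp [hne1]
    · simpa using hna1
    · simp
    · simp only [LT_adj_rl]
      rintro (h | h)
      · exact hne1 h.symm
      · exact hna1 h.symm
  have h2 : ∀ a b c, QRel G a b → QRel G b c →
      ∀ x ∈ (F a b).getLast?, ∀ y ∈ (F b c).head?, QRel (LTstep G) x y := by
    rintro a b c ⟨hadj, ⟨hne1, hna1⟩, ⟨hne2, hna2⟩⟩ _ x hx y hy
    simp only [hF, List.getLast?_cons_cons, List.getLast?_singleton, Option.mem_def,
      Option.some.injEq, List.head?_cons] at hx hy
    subst hx; subst hy
    refine ⟨Or.inr hadj.symm, ⟨?_, ?_⟩, ⟨?_, ?_⟩⟩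
    · simp [hne1]
    · simp
    · simp
    · simp only [LT_adj_lr]
      rintro (h | h)
      · exact hne2 h
      · exact hna2 h
  obtain ⟨m, mt, heq, hch'⟩ := chain_cycBind hne h1 h2 p l hch
  refine ⟨m, mt, hch', ?_, ?_, ?_⟩
  · rintro (v | v)
    · obtain ⟨q₀, hq₀, hq₀1⟩ := hc1 v
      obtain ⟨w, hw, hw1⟩ := exists_win_fst hq₀
      rw [← heq]
      exact ⟨(Sum.inl q₀.1, Sum.inl q₀.2), mem_cycBind w hw (by simp [hF, hw1]),
        by simp [hq₀1]⟩
    · obtain ⟨q₀, hq₀, hq₀1⟩ := hc1 v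
      obtain ⟨w, hw, hw1⟩ := exists_win_fst hq₀
      rw [← heq]
      exact ⟨(Sum.inr q₀.1, Sum.inr q₀.2), mem_cycBind w hw (by simp [hF, hw1]),
        by simp [hq₀1]⟩
  · rintro (v | v)
    · obtain ⟨q₀, hq₀, hq₀2⟩ := hc2 v
      obtain ⟨w, hw, hw1⟩ := exists_win_fst hq₀
      rw [← heq]
      exact ⟨(Sum.inl q₀.1, Sum.inl q₀.2), mem_cycBind w hw (by simp [hF, hw1]),
        by simp [hq₀2]⟩
    · obtain ⟨q₀, hq₀, hq₀2⟩ := hc2 v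
      obtain ⟨w, hw, hw1⟩ := exists_win_fst hq₀
      rw [← heq]
      exact ⟨(Sum.inr q₀.1, Sum.inr q₀.2), mem_cycBind w hw (by simp [hF, hw1]),
        by simp [hq₀2]⟩
  · have hL : (m :: mt).length = 2 * (l.length + 1) := by
      rw [← heq]
      exact length_cycBind (k := 2) (fun a b => by simp [hF]) p l
    have hc : Fintype.card (V ⊕ V) = Fintype.card V + Fintype.card V := Fintype.card_sum
    simp only [List.length_cons] at hlen
    rw [hL, hc]
    omega

end ILMAux

namespace ILMAux

variable {V : Type}

lemma QProp_LAT [Fintype V] {G : SimpleGraph V} (h : QProp G) : QProp (LATstep G) := by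
  classical
  obtain ⟨p, l, hch, hc1, hc2, hlen⟩ := h
  set F : (V × V) → (V × V) → List ((V ⊕ V) × (V ⊕ V)) := fun p q =>
    [(Sum.inl p.1, Sum.inl p.2), (Sum.inr p.2, Sum.inr q.1)] with hF
  have hne : ∀ a b, F a b ≠ [] := fun a b => by simp [hF]
  have h1 : ∀ a b, QRel G a b → (F a b).Chain' (QRel (LATstep G)) := by
    rintro a b ⟨hadj, ⟨hne1, hna1⟩, ⟨hne2, hna2⟩⟩
    refine List.isChain_pair.2 ⟨⟨hne1, hna1⟩, ⟨?_, ?_⟩, ⟨?_, ?_⟩⟩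
    · simp [hne1]
    · simpa using hna1
    · simp
    · simp only [LAT_adj_rl]
      rintro ⟨h, -⟩
      exact h rfl
  have h2 : ∀ a b c, QRel G a b → QRel G b c →
      ∀ x ∈ (F a b).getLast?, ∀ y ∈ (F b c).head?, QRel (LATstep G) x y := by
    rintro a b c ⟨hadj, ⟨hne1, hna1⟩, ⟨hne2, hna2⟩⟩ _ x hx y hy
    simp only [hF, List.getLast?_cons_cons, List.getLast?_singleton, Option.mem_def,
      Option.some.injEq, List.head?_cons] at hx hy
    subst hx; subst hy
    refine ⟨⟨hne2, hna2⟩, ⟨?_, ?_⟩, ⟨?_, ?_⟩⟩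
    · simp only [ne_eq, Sum.inr.injEq]
      exact fun h => hne2 h.symm
    · simp
    · simp
    · simp only [LAT_adj_lr]
      rintro ⟨h, -⟩
      exact h rfl
  obtain ⟨m, mt, heq, hch'⟩ := chain_cycBind hne h1 h2 p l hch
  refine ⟨m, mt, hch', ?_, ?_, ?_⟩
  · rintro (v | v)
    · obtain ⟨q₀, hq₀, hq₀1⟩ := hc1 v
      obtain ⟨w, hw, hw1⟩ := exists_win_fst hq₀
      rw [← heq]
      exact ⟨(Sum.inl q₀.1, Sum.inl q₀.2), mem_cycBind w hw (by simp [hF, hw1]),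
        by simp [hq₀1]⟩
    · obtain ⟨q₀, hq₀, hq₀2⟩ := hc2 v
      obtain ⟨w, hw, hw1⟩ := exists_win_fst hq₀
      rw [← heq]
      exact ⟨(Sum.inr q₀.2, Sum.inr w.2.1), mem_cycBind w hw (by simp [hF, hw1]),
        by simp [hq₀2]⟩
  · rintro (v | v)
    · obtain ⟨q₀, hq₀, hq₀2⟩ := hc2 v
      obtain ⟨w, hw, hw1⟩ := exists_win_fst hq₀
      rw [← heq]
      exact ⟨(Sum.inl q₀.1, Sum.inl q₀.2), mem_cycBind w hw (by simp [hF, hw1]),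
        by simp [hq₀2]⟩
    · obtain ⟨q₀, hq₀, hq₀1⟩ := hc1 v
      obtain ⟨w, hw, hw2⟩ := exists_win_snd hq₀
      rw [← heq]
      exact ⟨(Sum.inr w.1.2, Sum.inr w.2.1), mem_cycBind w hw (by simp [hF]),
        by simp [hw2, hq₀1]⟩
  · have hL : (m :: mt).length = 2 * (l.length + 1) := by
      rw [← heq]
      exact length_cycBind (k := 2) (fun a b => by simp [hF]) p l
    have hc : Fintype.card (V ⊕ V) = Fintype.card V + Fintype.card V := Fintype.card_sum
    simp only [List.length_cons] at hlen
    rw [hL, hc]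
    omega

end ILMAux

namespace ILMAux

variable {V : Type}

lemma length_flatMap_two {γ δ : Type*} (P : List γ) (f g : γ → δ) :
    (P.flatMap fun p => [f p, g p]).length = 2 * P.length := by
  induction P with
  | nil => simp
  | cons a P ih => simp [ih]; omega

/-- Perfect non-adjacency matching invariant. -/
def MProp [Fintype V] (G : SimpleGraph V) : Prop :=
  ∃ P : List (V × V),
    (∀ p ∈ P, p.1 ≠ p.2 ∧ ¬ G.Adj p.1 p.2) ∧
    (∀ x : V, x ∈ P.flatMap fun p => [p.1, p.2]) ∧
    (P.flatMap fun p => [p.1, p.2]).length = Fintype.card V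

lemma MProp_LAT_base [Fintype V] (G : SimpleGraph V) : MProp (LATstep G) := by
  classical
  refine ⟨Finset.univ.toList.map fun x => (Sum.inl x, Sum.inr x), ?_, ?_, ?_⟩
  · intro p hp
    obtain ⟨x, -, rfl⟩ := List.mem_map.1 hp
    exact ⟨by simp, by simp⟩
  · rintro (v | v) <;>
    · refine List.mem_flatMap.2 ⟨(Sum.inl v, Sum.inr v), List.mem_map.2 ⟨v, by simp, rfl⟩, by simp⟩
  · rw [length_flatMap_two, List.length_map, Finset.length_toList, Finset.card_univ]
    rw [Fintype.card_sum]
    omega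

lemma MProp_LT [Fintype V] {G : SimpleGraph V} (h : MProp G) : MProp (LTstep G) := by
  obtain ⟨P, hgood, hcov, hlen⟩ := h
  refine ⟨(P.map fun p => (Sum.inl p.1, Sum.inl p.2)) ++
      (P.map fun p => (Sum.inr p.1, Sum.inr p.2)), ?_, ?_, ?_⟩
  · intro p hp
    rcases List.mem_append.1 hp with hp | hp <;> obtain ⟨q, hq, rfl⟩ := List.mem_map.1 hp
    · exact ⟨by simp [(hgood q hq).1], by simpa using (hgood q hq).2⟩
    · exact ⟨by simp [(hgood q hq).1], by simp⟩
  · rintro (v | v)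
    · obtain ⟨q, hq, hv⟩ := List.mem_flatMap.1 (hcov v)
      simp only [List.mem_cons, List.not_mem_nil, or_false] at hv
      refine List.mem_flatMap.2 ⟨(Sum.inl q.1, Sum.inl q.2),
        List.mem_append.2 (Or.inl (List.mem_map.2 ⟨q, hq, rfl⟩)), ?_⟩
      rcases hv with rfl | rfl <;> simp
    · obtain ⟨q, hq, hv⟩ := List.mem_flatMap.1 (hcov v)
      simp only [List.mem_cons, List.not_mem_nil, or_false] at hv
      refine List.mem_flatMap.2 ⟨(Sum.inr q.1, Sum.inr q.2),
        List.mem_append.2 (Or.inr (List.mem_map.2 ⟨q, hq, rfl⟩)), ?_⟩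
      rcases hv with rfl | rfl <;> simp
  · rw [length_flatMap_two, List.length_append, List.length_map, List.length_map,
      Fintype.card_sum, ← hlen, length_flatMap_two]
    ring

lemma MProp_LATp [Fintype V] {G : SimpleGraph V} (h : MProp G) : MProp (LATstep G) := by
  obtain ⟨P, hgood, hcov, hlen⟩ := h
  refine ⟨(P.map fun p => (Sum.inl p.1, Sum.inl p.2)) ++
      (P.map fun p => (Sum.inr p.1, Sum.inr p.2)), ?_, ?_, ?_⟩
  · intro p hp
    rcases List.mem_append.1 hp with hp | hp <;> obtain ⟨q, hq, rfl⟩ := List.mem_map.1 hp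
    · exact ⟨by simp [(hgood q hq).1], by simpa using (hgood q hq).2⟩
    · exact ⟨by simp [(hgood q hq).1], by simp⟩
  · rintro (v | v)
    · obtain ⟨q, hq, hv⟩ := List.mem_flatMap.1 (hcov v)
      simp only [List.mem_cons, List.not_mem_nil, or_false] at hv
      refine List.mem_flatMap.2 ⟨(Sum.inl q.1, Sum.inl q.2),
        List.mem_append.2 (Or.inl (List.mem_map.2 ⟨q, hq, rfl⟩)), ?_⟩
      rcases hv with rfl | rfl <;> simp
    · obtain ⟨q, hq, hv⟩ := List.mem_flatMap.1 (hcov v)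
      simp only [List.mem_cons, List.not_mem_nil, or_false] at hv
      refine List.mem_flatMap.2 ⟨(Sum.inr q.1, Sum.inr q.2),
        List.mem_append.2 (Or.inr (List.mem_map.2 ⟨q, hq, rfl⟩)), ?_⟩
      rcases hv with rfl | rfl <;> simp
  · rw [length_flatMap_two, List.length_append, List.length_map, List.length_map,
      Fintype.card_sum, ← hlen, length_flatMap_two]
    ring

end ILMAux

namespace ILMAux

lemma QProp_base {U : Type} [Fintype U] [DecidableEq U] {W : SimpleGraph U} (hM : MProp W)
    (hcard : 4 ≤ Fintype.card U) : QProp (LATstep (LTstep W)) := by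
  classical
  obtain ⟨P, hgood, hcov, hlen0⟩ := hM
  have hlen : 2 * P.length = Fintype.card U := by
    rw [← hlen0, length_flatMap_two]
  have hnodup : (P.flatMap fun p => [p.1, p.2]).Nodup :=
    nodup_of_cover hcov hlen0
  have hD : P.Pairwise (fun p q : U × U =>
      p.1 ≠ q.1 ∧ p.1 ≠ q.2 ∧ p.2 ≠ q.1 ∧ p.2 ≠ q.2) := by
    have hpw := (List.nodup_flatMap.1 hnodup).2
    refine hpw.imp ?_
    intro p q hdis
    have hdis' : ∀ x, x ∈ [p.1, p.2] → x ∈ [q.1, q.2] → False := fun x h1 h2 => hdis h1 h2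
    exact ⟨fun he => hdis' p.1 (by simp) (by simp [he]),
      fun he => hdis' p.1 (by simp) (by simp [he]),
      fun he => hdis' p.2 (by simp) (by simp [he]),
      fun he => hdis' p.2 (by simp) (by simp [he])⟩
  cases P with
  | nil => simp at hlen; omega
  | cons p₁ Pt =>
  have hPtne : Pt ≠ [] := by
    intro h
    rw [h] at hlen
    simp at hlen
    omega
  set B : List (U × U) := (p₁ :: Pt).map Prod.swap with hB
  have hgmem : Pt.getLast hPtne ∈ Pt := List.getLast_mem hPtne
  set g : U × U := Pt.getLast hPtne with hg
  have hgl : Pt.getLast? = some g := List.getLast?_eq_getLast_of_ne_nil hPtne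
  have hgl2 : (p₁ :: Pt).getLast? = some g := by
    rw [show p₁ :: Pt = [p₁] ++ Pt from rfl, List.getLast?_append_of_ne_nil _ hPtne, hgl]
  have hDg : p₁.1 ≠ g.1 ∧ p₁.1 ≠ g.2 ∧ p₁.2 ≠ g.1 ∧ p₁.2 ≠ g.2 :=
    (List.pairwise_cons.1 hD).1 g hgmem
  have hgoodp₁ := hgood p₁ (List.mem_cons_self)
  have hgoodg := hgood g (List.mem_cons_of_mem _ hgmem)
  set R₀ : (U × U) → (U × U) → Prop :=
    (fun p q => p.1 ≠ q.2 ∧ p.1 ≠ p.2 ∧ ¬ W.Adj p.1 p.2) with hR₀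
  have hPR : (p₁ :: Pt).Pairwise R₀ := by
    refine List.Pairwise.imp_of_mem ?_ hD
    intro a b ha _ hab
    exact ⟨hab.2.1, (hgood a ha).1, (hgood a ha).2⟩
  have hBR : B.Pairwise R₀ := by
    rw [hB, List.pairwise_map]
    refine List.Pairwise.imp_of_mem ?_ hD
    intro a b ha _ hab
    exact ⟨hab.2.2.1, (hgood a ha).1.symm, fun h => (hgood a ha).2 h.symm⟩
  have hC12 : List.Chain' R₀ ((p₁ :: Pt) ++ B) := by
    refine List.isChain_append.2 ⟨hPR.isChain, hBR.isChain, ?_⟩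
    intro x hx y hy
    rw [hgl2, Option.mem_def, Option.some.injEq] at hx
    rw [hB] at hy
    simp only [List.map_cons, List.head?_cons, Option.mem_def, Option.some.injEq] at hy
    subst hx; subst hy
    exact ⟨hDg.1.symm, hgoodg.1, hgoodg.2⟩
  have hCfull : List.Chain' R₀ (((p₁ :: Pt) ++ B) ++ [p₁]) := by
    refine List.isChain_append.2 ⟨hC12, by simp, ?_⟩
    intro x hx y hy
    have hBlast : B.getLast? = some (Prod.swap g) := by
      rw [hB, List.getLast?_map, hgl2]
      rfl
    rw [List.getLast?_append_of_ne_nil _ (by simp [hB]), hBlast,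
      Option.mem_def, Option.some.injEq] at hx
    simp only [List.head?_cons, Option.mem_def, Option.some.injEq] at hy
    subst hx; subst hy
    exact ⟨hDg.2.2.2.symm, fun h => hgoodg.1 h.symm, fun h => hgoodg.2 h.symm⟩
  have hchain : List.Chain R₀ p₁ ((Pt ++ B) ++ [p₁]) := by
    have he : (((p₁ :: Pt) ++ B) ++ [p₁]) = p₁ :: ((Pt ++ B) ++ [p₁]) := by simp
    rw [he] at hCfull
    exact hCfull
  -- the blocks
  set F : (U × U) → (U × U) → List (((U ⊕ U) ⊕ (U ⊕ U)) × ((U ⊕ U) ⊕ (U ⊕ U))) := fun p _ =>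
    [(Sum.inr (Sum.inr p.2), Sum.inl (Sum.inr p.2)),
     (Sum.inl (Sum.inl p.1), Sum.inl (Sum.inl p.2)),
     (Sum.inr (Sum.inl p.2), Sum.inr (Sum.inl p.1)),
     (Sum.inl (Sum.inr p.1), Sum.inr (Sum.inr p.1))] with hF
  have hne : ∀ a b, F a b ≠ [] := fun a b => by simp [hF]
  have h1 : ∀ a b, R₀ a b → (F a b).Chain' (QRel (LATstep (LTstep W))) := by
    rintro a b ⟨-, hab, hna⟩
    refine List.isChain_cons_cons.2 ⟨?_, List.isChain_cons_cons.2 ⟨?_, List.isChain_pair.2 ?_⟩⟩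
    · refine ⟨?_, ⟨by simp, by simp⟩, ⟨by simp, ?_⟩⟩
      · show (LATstep (LTstep W)).Adj (Sum.inr (Sum.inr a.2)) (Sum.inl (Sum.inl a.1))
        rw [LAT_adj_rl]
        refine ⟨by simp, ?_⟩
        rw [LT_adj_lr]
        rintro (h | h)
        · exact hab h
        · exact hna h
      · show ¬ (LATstep (LTstep W)).Adj (Sum.inl (Sum.inl a.1)) (Sum.inl (Sum.inr a.2))
        rw [LAT_adj_ll, LT_adj_lr]
        rintro (h | h)
        · exact hab h
        · exact hna h
    · refine ⟨?_, ⟨by simp [hab], ?_⟩, ⟨by simp, by simp⟩⟩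
      · show (LATstep (LTstep W)).Adj (Sum.inl (Sum.inl a.1)) (Sum.inr (Sum.inl a.2))
        rw [LAT_adj_lr, LT_adj_ll]
        exact ⟨by simp [hab], hna⟩
      · show ¬ (LATstep (LTstep W)).Adj (Sum.inl (Sum.inl a.1)) (Sum.inl (Sum.inl a.2))
        rw [LAT_adj_ll, LT_adj_ll]
        exact hna
    · refine ⟨?_, ⟨?_, by simp⟩, ⟨by simp, by simp⟩⟩
      · show (LATstep (LTstep W)).Adj (Sum.inr (Sum.inl a.2)) (Sum.inl (Sum.inr a.1))
        rw [LAT_adj_rl]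
        refine ⟨by simp, ?_⟩
        rw [LT_adj_rl]
        rintro (h | h)
        · exact hab h.symm
        · exact hna h.symm
      · simp only [ne_eq, Sum.inr.injEq, Sum.inl.injEq]
        exact fun h => hab h.symm
  have h2 : ∀ a b c, R₀ a b → R₀ b c →
      ∀ x ∈ (F a b).getLast?, ∀ y ∈ (F b c).head?, QRel (LATstep (LTstep W)) x y := by
    rintro a b c ⟨hane, -, -⟩ _ x hx y hy
    simp only [hF, List.getLast?_cons_cons, List.getLast?_singleton, Option.mem_def,
      Option.some.injEq, List.head?_cons] at hx hy
    subst hx; subst hy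
    refine ⟨?_, ⟨by simp, by simp⟩, ⟨?_, by simp⟩⟩
    · show (LATstep (LTstep W)).Adj (Sum.inl (Sum.inr a.1)) (Sum.inr (Sum.inr b.2))
      rw [LAT_adj_lr, LT_adj_rr]
      exact ⟨by simp [hane], by simp⟩
    · simp only [ne_eq, Sum.inr.injEq]
      exact fun h => hane h.symm
  obtain ⟨m, mt, heq, hch'⟩ := chain_cycBind hne h1 h2 p₁ (Pt ++ B) hchain
  have hfst : ∀ u : U, ∃ r ∈ p₁ :: (Pt ++ B), r.1 = u := by
    intro u
    obtain ⟨q, hq, hu⟩ := List.mem_flatMap.1 (hcov u)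
    simp only [List.mem_cons, List.not_mem_nil, or_false] at hu
    rcases hu with rfl | rfl
    · refine ⟨q, ?_, rfl⟩
      rcases List.mem_cons.1 hq with h | h
      · exact h ▸ List.mem_cons_self
      · exact List.mem_cons_of_mem _ (List.mem_append.2 (Or.inl h))
    · exact ⟨Prod.swap q, List.mem_cons_of_mem _
        (List.mem_append.2 (Or.inr (List.mem_map.2 ⟨q, hq, rfl⟩))), rfl⟩
  have hsnd : ∀ u : U, ∃ r ∈ p₁ :: (Pt ++ B), r.2 = u := by
    intro u
    obtain ⟨q, hq, hu⟩ := List.mem_flatMap.1 (hcov u)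
    simp only [List.mem_cons, List.not_mem_nil, or_false] at hu
    rcases hu with rfl | rfl
    · exact ⟨Prod.swap q, List.mem_cons_of_mem _
        (List.mem_append.2 (Or.inr (List.mem_map.2 ⟨q, hq, rfl⟩))), rfl⟩
    · refine ⟨q, ?_, rfl⟩
      rcases List.mem_cons.1 hq with h | h
      · exact h ▸ List.mem_cons_self
      · exact List.mem_cons_of_mem _ (List.mem_append.2 (Or.inl h))
  refine ⟨m, mt, hch', ?_, ?_, ?_⟩
  · rintro ((u | u) | (u | u))
    · obtain ⟨r, hr, hr1⟩ := hfst u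
      obtain ⟨w, hw, hw1⟩ := exists_win_fst hr
      rw [← heq]
      exact ⟨(Sum.inl (Sum.inl r.1), Sum.inl (Sum.inl r.2)),
        mem_cycBind w hw (by simp [hF, hw1]), by simp [hr1]⟩
    · obtain ⟨r, hr, hr1⟩ := hfst u
      obtain ⟨w, hw, hw1⟩ := exists_win_fst hr
      rw [← heq]
      exact ⟨(Sum.inl (Sum.inr r.1), Sum.inr (Sum.inr r.1)),
        mem_cycBind w hw (by simp [hF, hw1]), by simp [hr1]⟩
    · obtain ⟨r, hr, hr2⟩ := hsnd u
      obtain ⟨w, hw, hw1⟩ := exists_win_fst hr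
      rw [← heq]
      exact ⟨(Sum.inr (Sum.inl r.2), Sum.inr (Sum.inl r.1)),
        mem_cycBind w hw (by simp [hF, hw1]), by simp [hr2]⟩
    · obtain ⟨r, hr, hr2⟩ := hsnd u
      obtain ⟨w, hw, hw1⟩ := exists_win_fst hr
      rw [← heq]
      exact ⟨(Sum.inr (Sum.inr r.2), Sum.inl (Sum.inr r.2)),
        mem_cycBind w hw (by simp [hF, hw1]), by simp [hr2]⟩
  · rintro ((u | u) | (u | u))
    · obtain ⟨r, hr, hr2⟩ := hsnd u
      obtain ⟨w, hw, hw1⟩ := exists_win_fst hr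
      rw [← heq]
      exact ⟨(Sum.inl (Sum.inl r.1), Sum.inl (Sum.inl r.2)),
        mem_cycBind w hw (by simp [hF, hw1]), by simp [hr2]⟩
    · obtain ⟨r, hr, hr2⟩ := hsnd u
      obtain ⟨w, hw, hw1⟩ := exists_win_fst hr
      rw [← heq]
      exact ⟨(Sum.inr (Sum.inr r.2), Sum.inl (Sum.inr r.2)),
        mem_cycBind w hw (by simp [hF, hw1]), by simp [hr2]⟩
    · obtain ⟨r, hr, hr1⟩ := hfst u
      obtain ⟨w, hw, hw1⟩ := exists_win_fst hr
      rw [← heq]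
      exact ⟨(Sum.inr (Sum.inl r.2), Sum.inr (Sum.inl r.1)),
        mem_cycBind w hw (by simp [hF, hw1]), by simp [hr1]⟩
    · obtain ⟨r, hr, hr1⟩ := hfst u
      obtain ⟨w, hw, hw1⟩ := exists_win_fst hr
      rw [← heq]
      exact ⟨(Sum.inl (Sum.inr r.1), Sum.inr (Sum.inr r.1)),
        mem_cycBind w hw (by simp [hF, hw1]), by simp [hr1]⟩
  · have hL : (m :: mt).length = 4 * ((Pt ++ B).length + 1) := by
      rw [← heq]
      exact length_cycBind (k := 4) (fun a b => by simp [hF]) p₁ (Pt ++ B)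
    have hc4 : Fintype.card ((U ⊕ U) ⊕ (U ⊕ U)) = 4 * Fintype.card U := by
      rw [Fintype.card_sum, Fintype.card_sum]
      ring
    rw [hL, hc4, ← hlen]
    simp only [List.length_append, hB, List.length_map, List.length_cons]
    ring
end ILMAux

namespace ILMAux

lemma QProp_ham {V : Type} [Fintype V] [DecidableEq V] {G : SimpleGraph V}
    (hQ : QProp G) (h3 : 3 ≤ Fintype.card V) : G.IsHamiltonian := by
  obtain ⟨p, l, hch, hc1, hc2, hlen⟩ := hQ
  have h1 : List.Chain (fun a b : V × V => G.Adj a.1 b.1) p (l ++ [p]) :=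
    List.IsChain.imp (fun ⦃a b⦄ h => h.1) hch
  have hadj : List.Chain G.Adj p.1 ((l.map Prod.fst) ++ [p.1]) := by
    have h2 := (List.isChain_cons_map (Prod.fst : V × V → V)).2 h1
    simpa [List.Chain] using h2
  have cov : ∀ x, x ∈ p.1 :: l.map Prod.fst := by
    intro x
    obtain ⟨q, hq, hq1⟩ := hc1 x
    rcases List.mem_cons.1 hq with rfl | hq
    · simp [hq1]
    · exact List.mem_cons_of_mem _ (List.mem_map.2 ⟨q, hq, hq1⟩)
  have hlen' : (p.1 :: l.map Prod.fst).length = Fintype.card V := by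
    simpa using hlen
  exact isHamiltonian_of_list G p.1 (l.map Prod.fst) hadj cov hlen' h3

lemma card_ILMVertex (V : Type) [Fintype V] : ∀ t : ℕ,
    Fintype.card (ILMVertex V t) = 2 ^ t * Fintype.card V
  | 0 => by
    have h0 : Fintype.card (ILMVertex V 0) = Fintype.card V := rfl
    rw [h0]; ring
  | t + 1 => by
    have hs : Fintype.card (ILMVertex V (t + 1))
        = Fintype.card (ILMVertex V t ⊕ ILMVertex V t) := rfl
    rw [hs, Fintype.card_sum, card_ILMVertex V t]
    ring

end ILMAux

open ILMAux in
/-- If `G` has at least two vertices and the first two indices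
`τ₁ < τ₂` with `s_{τ₁} = s_{τ₂} = 0` satisfy `τ₂ ≥ τ₁ + 2`, then for all
`t ≥ τ₂ + 1` the graph `ILM^t(S,G)` is Hamiltonian. -/
theorem ILM_isHamiltonian {V : Type} [Fintype V] [DecidableEq V] (G : SimpleGraph V)
    (hcard : 2 ≤ Fintype.card V) (S : ℕ → Bool) (τ₁ τ₂ : ℕ) (h12 : τ₁ + 2 ≤ τ₂)
    (hτ₁ : S τ₁ = false) (hτ₂ : S τ₂ = false)
    (hfirst : ∀ i < τ₂, i ≠ τ₁ → S i = true)
    (t : ℕ) (ht : τ₂ + 1 ≤ t) :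
    (ILM S G t).IsHamiltonian := by
  classical
  have hILM_T : ∀ u, S u = true → ILM S G (u + 1) = LTstep (ILM S G u) := by
    intro u h
    simp [ILM, h]
    rfl
  have hILM_F : ∀ u, S u = false → ILM S G (u + 1) = LATstep (ILM S G u) := by
    intro u h
    simp [ILM, h]
    rfl
  have hMstep : ∀ u, MProp (ILM S G u) → MProp (ILM S G (u + 1)) := by
    intro u hm
    cases hSu : S u with
    | true => rw [hILM_T u hSu]; exact MProp_LT hm
    | false => rw [hILM_F u hSu]; exact MProp_LATp hm
  have hQstep : ∀ u, QProp (ILM S G u) → QProp (ILM S G (u + 1)) := by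
    intro u hq
    cases hSu : S u with
    | true => rw [hILM_T u hSu]; exact QProp_LT hq
    | false => rw [hILM_F u hSu]; exact QProp_LAT hq
  have hMbase : MProp (ILM S G (τ₁ + 1)) := by
    rw [hILM_F τ₁ hτ₁]
    exact MProp_LAT_base _
  have hMall : ∀ s, MProp (ILM S G (τ₁ + 1 + s)) := by
    intro s
    induction s with
    | zero => exact hMbase
    | succ s ih => exact hMstep _ ih
  have hMW : MProp (ILM S G (τ₂ - 1)) := by
    have h := hMall (τ₂ - τ₁ - 2)
    have he : τ₁ + 1 + (τ₂ - τ₁ - 2) = τ₂ - 1 := by omega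
    rw [he] at h
    exact h
  have hSprev : S (τ₂ - 1) = true := hfirst _ (by omega) (by omega)
  have hcard4 : 4 ≤ Fintype.card (ILMVertex V (τ₂ - 1)) := by
    rw [card_ILMVertex]
    have h2 : 2 ^ 1 ≤ 2 ^ (τ₂ - 1) := Nat.pow_le_pow_right (by norm_num) (by omega)
    calc (4 : ℕ) = 2 * 2 := by norm_num
      _ ≤ 2 ^ (τ₂ - 1) * Fintype.card V := Nat.mul_le_mul (by simpa using h2) hcard
  have hQ1 : QProp (ILM S G (τ₂ + 1)) := by
    have he : τ₂ - 1 + 1 = τ₂ := by omega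
    have hτ₂' : S (τ₂ - 1 + 1) = false := by rw [he]; exact hτ₂
    have goal' : QProp (ILM S G ((τ₂ - 1 + 1) + 1)) := by
      rw [hILM_F _ hτ₂', hILM_T _ hSprev]
      exact QProp_base hMW hcard4
    rw [he] at goal'
    exact goal'
  have hQall : ∀ s, QProp (ILM S G (τ₂ + 1 + s)) := by
    intro s
    induction s with
    | zero => exact hQ1
    | succ s ih => exact hQstep _ ih
  have hQt : QProp (ILM S G t) := by
    have h := hQall (t - (τ₂ + 1))
    have he : τ₂ + 1 + (t - (τ₂ + 1)) = t := by omega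
    rw [he] at h
    exact h
  have h3 : 3 ≤ Fintype.card (ILMVertex V t) := by
    rw [card_ILMVertex]
    have h2 : 2 ^ 1 ≤ 2 ^ t := Nat.pow_le_pow_right (by norm_num) (by omega)
    calc (3 : ℕ) ≤ 2 * 2 := by norm_num
      _ ≤ 2 ^ t * Fintype.card V := Nat.mul_le_mul (by simpa using h2) hcard
  exact QProp_ham hQt h3
end
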